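/- arXiv:1406.5942 — 3 statements merged into one kernel-verified Lean document; each statement's English description precedes it below -/
import Mathlib

section
/- Let K be a field of characteristic 0 equipped with a nontrivial involution x ↦ x̄ (a ring homomorphism with x̄̄ = x and x̄ ≠ x for some x), and let Σ be a dagger signature. Two dot-diagrams F and G over Σ with the same input list and the same output list are isomorphic if and only if for every dagger interpretation M of Σ over K, the value matrices ⟦F⟧_M and ⟦G⟧_M are equal. -/
open scoped Classical

/-- A monoidal signature: object labels and morphism labels with domain/codomain arities. -/
structure Signature where
  Obj : Type
  Mor : Type
  dom : Mor → List Obj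
  cod : Mor → List Obj

/-- A dot-diagram over a signature `σ`: finite sets of boxes and dots, lists of diagram
inputs and outputs, labelling functions, and wiring functions sending each box input/output
and each diagram input/output to a dot, subject to the typing conditions. -/
structure DotDiagram (σ : Signature) where
  B : Type
  D : Type
  fB : Fintype B
  fD : Fintype D
  dB : DecidableEq B
  dD : DecidableEq D
  lb : B → σ.Mor
  ld : D → σ.Obj
  nIn : ℕ
  nOut : ℕ
  win : (b : B) → Fin (σ.dom (lb b)).length → D
  wout : (b : B) → Fin (σ.cod (lb b)).length → D
  pin : Fin nIn → D
  pout : Fin nOut → D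
  tyIn : ∀ b i, ld (win b i) = (σ.dom (lb b)).get i
  tyOut : ∀ b j, ld (wout b j) = (σ.cod (lb b)).get j

attribute [instance] DotDiagram.fB DotDiagram.fD DotDiagram.dB DotDiagram.dD

namespace DotDiagram

variable {σ : Signature}

/-- A dot-diagram is closed when it has no diagram inputs or outputs. -/
def Closed (F : DotDiagram σ) : Prop := F.nIn = 0 ∧ F.nOut = 0

/-- A dot-diagram is simple when both wiring functions (on the disjoint union of box
ports and diagram ports) are surjective onto the dots. -/
def Simple (F : DotDiagram σ) : Prop :=
  (∀ d : F.D, (∃ b i, F.win b i = d) ∨ (∃ k, F.pin k = d)) ∧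
  (∀ d : F.D, (∃ b j, F.wout b j = d) ∨ (∃ k, F.pout k = d))

/-- A homomorphism of dot-diagrams: a pair of functions on boxes and dots respecting
the labellings, the wiring functions, and the connections to diagram inputs/outputs. -/
structure Hom (F G : DotDiagram σ) where
  onB : F.B → G.B
  onD : F.D → G.D
  map_lb : ∀ b, G.lb (onB b) = F.lb b
  map_ld : ∀ d, G.ld (onD d) = F.ld d
  map_win : ∀ (b : F.B) (i : Fin (σ.dom (F.lb b)).length),
    G.win (onB b) (Fin.cast (by rw [map_lb b]) i) = onD (F.win b i)
  map_wout : ∀ (b : F.B) (j : Fin (σ.cod (F.lb b)).length),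
    G.wout (onB b) (Fin.cast (by rw [map_lb b]) j) = onD (F.wout b j)
  eq_nIn : F.nIn = G.nIn
  eq_nOut : F.nOut = G.nOut
  map_pin : ∀ k, onD (F.pin k) = G.pin (Fin.cast eq_nIn k)
  map_pout : ∀ k, onD (F.pout k) = G.pout (Fin.cast eq_nOut k)

/-- Two dot-diagrams are isomorphic when there is a homomorphism between them which is
bijective on boxes and on dots. -/
def Isomorphic (F G : DotDiagram σ) : Prop :=
  ∃ Φ : Hom F G, Function.Bijective Φ.onB ∧ Function.Bijective Φ.onD

end DotDiagram

/-- An interpretation of a signature over a commutative semiring `R`: a finite set for each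
object label and a tensor of matrix entries for each morphism label. -/
structure Interp (σ : Signature) (R : Type) [CommSemiring R] where
  car : σ.Obj → Type
  finCar : ∀ A, Fintype (car A)
  val : (f : σ.Mor) →
    ((i : Fin (σ.dom f).length) → car ((σ.dom f).get i)) →
    ((j : Fin (σ.cod f).length) → car ((σ.cod f).get j)) → R

attribute [instance] Interp.finCar

namespace Interp

variable {σ : Signature} {R : Type} [CommSemiring R]

/-- The tensor entry contributed by a box `b` under an assignment `φ` of dots. -/
def boxEntry (M : Interp σ R) (F : DotDiagram σ)
    (φ : (d : F.D) → M.car (F.ld d)) (b : F.B) : R :=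
  M.val (F.lb b)
    (fun i => cast (congrArg M.car (F.tyIn b i)) (φ (F.win b i)))
    (fun j => cast (congrArg M.car (F.tyOut b j)) (φ (F.wout b j)))

/-- The scalar value of a closed dot-diagram: the sum over all assignments of elements to
dots of the product over boxes of the corresponding tensor entries. -/
noncomputable def value (M : Interp σ R) (F : DotDiagram σ) : R :=
  ∑ φ : ((d : F.D) → M.car (F.ld d)), ∏ b : F.B, M.boxEntry F φ b

/-- The value matrix of a dot-diagram: the entry at a boundary assignment `(x; y)` is the
sum over all assignments of elements to dots compatible with the boundary of the product
over boxes of the corresponding tensor entries. -/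
noncomputable def valueMatrix (M : Interp σ R) (F : DotDiagram σ)
    (x : Fin F.nIn → (Σ A : σ.Obj, M.car A))
    (y : Fin F.nOut → (Σ A : σ.Obj, M.car A)) : R :=
  ∑ φ : ((d : F.D) → M.car (F.ld d)),
    if (∀ k, (⟨F.ld (F.pin k), φ (F.pin k)⟩ : Σ A : σ.Obj, M.car A) = x k) ∧
       (∀ l, (⟨F.ld (F.pout l), φ (F.pout l)⟩ : Σ A : σ.Obj, M.car A) = y l)
    then ∏ b : F.B, M.boxEntry F φ b else 0

end Interp

/-- A dagger signature: a signature together with an involution on morphism labels which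
exchanges domains and codomains. -/
structure DaggerSignature extends Signature where
  dag : Mor → Mor
  dag_dag : ∀ f, dag (dag f) = f
  dom_dag : ∀ f, dom (dag f) = cod f
  cod_dag : ∀ f, cod (dag f) = dom f

/-- An interpretation of a dagger signature is a dagger interpretation (w.r.t. an
involution `conj` on the scalars) when the tensor interpreting `f†` is the
`conj`-conjugate transpose of the tensor interpreting `f`. -/
def Interp.IsDagger {σ : DaggerSignature} {K : Type} [CommSemiring K]
    (M : Interp σ.toSignature K) (conj : K →+* K) : Prop :=
  ∀ (f : σ.Mor)
    (x : (i : Fin (σ.toSignature.dom f).length) → M.car ((σ.toSignature.dom f).get i))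
    (y : (j : Fin (σ.toSignature.cod f).length) → M.car ((σ.toSignature.cod f).get j)),
    M.val (σ.dag f) (cast (by rw [σ.dom_dag]) y) (cast (by rw [σ.cod_dag]) x)
      = conj (M.val f x y)

namespace DotDiagram

variable {σ : Signature}

theorem Hom.ext' {F G : DotDiagram σ} {Φ Ψ : Hom F G} (h1 : Φ.onB = Ψ.onB)
    (h2 : Φ.onD = Ψ.onD) : Φ = Ψ := by
  cases Φ; cases Ψ; cases h1; cases h2; rfl

instance homFinite (F G : DotDiagram σ) : Finite (Hom F G) :=
  Finite.of_injective (fun Φ => (Φ.onB, Φ.onD)) (fun _ _ h =>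
    Hom.ext' (congrArg Prod.fst h) (congrArg Prod.snd h))

def Hom.idHom (F : DotDiagram σ) : Hom F F where
  onB := id
  onD := id
  map_lb _ := rfl
  map_ld _ := rfl
  map_win _ _ := rfl
  map_wout _ _ := rfl
  eq_nIn := rfl
  eq_nOut := rfl
  map_pin _ := rfl
  map_pout _ := rfl

def Hom.comp {F G H : DotDiagram σ} (Ψ : Hom G H) (Φ : Hom F G) : Hom F H where
  onB := Ψ.onB ∘ Φ.onB
  onD := Ψ.onD ∘ Φ.onD
  map_lb b := (Ψ.map_lb _).trans (Φ.map_lb b)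
  map_ld d := (Ψ.map_ld _).trans (Φ.map_ld d)
  map_win b i :=
    (Ψ.map_win (Φ.onB b) (Fin.cast (by rw [Φ.map_lb b]) i)).trans
      (congrArg Ψ.onD (Φ.map_win b i))
  map_wout b j :=
    (Ψ.map_wout (Φ.onB b) (Fin.cast (by rw [Φ.map_lb b]) j)).trans
      (congrArg Ψ.onD (Φ.map_wout b j))
  eq_nIn := Φ.eq_nIn.trans Ψ.eq_nIn
  eq_nOut := Φ.eq_nOut.trans Ψ.eq_nOut
  map_pin k := (congrArg Ψ.onD (Φ.map_pin k)).trans (Ψ.map_pin _)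
  map_pout l := (congrArg Ψ.onD (Φ.map_pout l)).trans (Ψ.map_pout _)

def Hom.Surj {F G : DotDiagram σ} (Φ : Hom F G) : Prop :=
  Function.Surjective Φ.onB ∧ Function.Surjective Φ.onD

noncomputable def homCount (F G : DotDiagram σ) : ℕ := Nat.card (Hom F G)

noncomputable def surjCount (F G : DotDiagram σ) : ℕ :=
  Nat.card {Φ : Hom F G // Φ.Surj}

end DotDiagram

namespace DotDiagram

variable {σ : Signature}

def IsClosedPair (H : DotDiagram σ) (P : Set H.B) (Q : Set H.D) : Prop :=
  (∀ b ∈ P, ∀ i, H.win b i ∈ Q) ∧ (∀ b ∈ P, ∀ j, H.wout b j ∈ Q) ∧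
  (∀ k, H.pin k ∈ Q) ∧ (∀ l, H.pout l ∈ Q)

noncomputable def restrict (H : DotDiagram σ) (P : Set H.B) (Q : Set H.D)
    (h : IsClosedPair H P Q) : DotDiagram σ where
  B := P
  D := Q
  fB := (Set.toFinite P).fintype
  fD := (Set.toFinite Q).fintype
  dB := inferInstance
  dD := inferInstance
  lb b := H.lb b.1
  ld d := H.ld d.1
  nIn := H.nIn
  nOut := H.nOut
  win b i := ⟨H.win b.1 i, h.1 b.1 b.2 i⟩
  wout b j := ⟨H.wout b.1 j, h.2.1 b.1 b.2 j⟩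
  pin k := ⟨H.pin k, h.2.2.1 k⟩
  pout l := ⟨H.pout l, h.2.2.2 l⟩
  tyIn b i := H.tyIn b.1 i
  tyOut b j := H.tyOut b.1 j

def inclusionHom (H : DotDiagram σ) (P : Set H.B) (Q : Set H.D)
    (h : IsClosedPair H P Q) : Hom (restrict H P Q h) H where
  onB := Subtype.val
  onD := Subtype.val
  map_lb _ := rfl
  map_ld _ := rfl
  map_win _ _ := rfl
  map_wout _ _ := rfl
  eq_nIn := rfl
  eq_nOut := rfl
  map_pin _ := rfl
  map_pout _ := rfl

def corestrictTo {F H : DotDiagram σ} (Φ : Hom F H) (P : Set H.B) (Q : Set H.D)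
    (h : IsClosedPair H P Q) (hB : ∀ b, Φ.onB b ∈ P) (hD : ∀ d, Φ.onD d ∈ Q) :
    Hom F (restrict H P Q h) where
  onB b := ⟨Φ.onB b, hB b⟩
  onD d := ⟨Φ.onD d, hD d⟩
  map_lb b := Φ.map_lb b
  map_ld d := Φ.map_ld d
  map_win b i := Subtype.ext (Φ.map_win b i)
  map_wout b j := Subtype.ext (Φ.map_wout b j)
  eq_nIn := Φ.eq_nIn
  eq_nOut := Φ.eq_nOut
  map_pin k := Subtype.ext (Φ.map_pin k)
  map_pout l := Subtype.ext (Φ.map_pout l)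

lemma range_isClosedPair {F H : DotDiagram σ} (Φ : Hom F H) :
    IsClosedPair H (Set.range Φ.onB) (Set.range Φ.onD) := by
  refine ⟨?_, ?_, ?_, ?_⟩
  · rintro b ⟨b₀, rfl⟩ i
    exact ⟨F.win b₀ (Fin.cast (by rw [Φ.map_lb b₀]) i),
      (Φ.map_win b₀ (Fin.cast (by rw [Φ.map_lb b₀]) i)).symm⟩
  · rintro b ⟨b₀, rfl⟩ j
    exact ⟨F.wout b₀ (Fin.cast (by rw [Φ.map_lb b₀]) j),
      (Φ.map_wout b₀ (Fin.cast (by rw [Φ.map_lb b₀]) j)).symm⟩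
  · intro k
    exact ⟨F.pin (Fin.cast Φ.eq_nIn.symm k), Φ.map_pin _⟩
  · intro l
    exact ⟨F.pout (Fin.cast Φ.eq_nOut.symm l), Φ.map_pout _⟩

end DotDiagram

lemma Nat.card_sigma' {ι : Type} [Fintype ι] {α : ι → Type} [∀ i, Finite (α i)] :
    Nat.card (Sigma α) = ∑ i, Nat.card (α i) := by
  have : ∀ i, Fintype (α i) := fun i => Fintype.ofFinite _
  simp only [Nat.card_eq_fintype_card, Fintype.card_sigma]

namespace DotDiagram

variable {σ : Signature}

/-- The map sending a hom to its (closed) range pair. -/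
noncomputable def rangePair {F H : DotDiagram σ} (Φ : Hom F H) :
    {pq : Set H.B × Set H.D // IsClosedPair H pq.1 pq.2} :=
  ⟨(Set.range Φ.onB, Set.range Φ.onD), range_isClosedPair Φ⟩

noncomputable def fiberEquiv (F H : DotDiagram σ)
    (P : Set H.B) (Q : Set H.D) (hc : IsClosedPair H P Q) :
    {Φ : Hom F H // Set.range Φ.onB = P ∧ Set.range Φ.onD = Q} ≃
    {Ψ : Hom F (restrict H P Q hc) // Ψ.Surj} where
  toFun Φ := ⟨corestrictTo Φ.1 P Q hc (fun b => by
        have h := Set.mem_range_self (f := Φ.1.onB) b; rwa [Φ.2.1] at h)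
      (fun d => by
        have h := Set.mem_range_self (f := Φ.1.onD) d; rwa [Φ.2.2] at h), by
    constructor
    · rintro ⟨b', hb'⟩
      rw [← Φ.2.1] at hb'
      obtain ⟨b, hb⟩ := hb'
      exact ⟨b, Subtype.ext hb⟩
    · rintro ⟨d', hd'⟩
      rw [← Φ.2.2] at hd'
      obtain ⟨d, hd⟩ := hd'
      exact ⟨d, Subtype.ext hd⟩⟩
  invFun Ψ := ⟨(inclusionHom H P Q hc).comp Ψ.1, by
    constructor
    · apply Set.eq_of_subset_of_subset
      · rintro b' ⟨b, rfl⟩; exact (Ψ.1.onB b).2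
      · intro p hp
        obtain ⟨b, hb⟩ := Ψ.2.1 ⟨p, hp⟩
        exact ⟨b, congrArg Subtype.val hb⟩
    · apply Set.eq_of_subset_of_subset
      · rintro d' ⟨d, rfl⟩; exact (Ψ.1.onD d).2
      · intro q hq
        obtain ⟨d, hd⟩ := Ψ.2.2 ⟨q, hq⟩
        exact ⟨d, congrArg Subtype.val hd⟩⟩
  left_inv Φ := Subtype.ext (Hom.ext' rfl rfl)
  right_inv Ψ := Subtype.ext (Hom.ext' rfl rfl)

lemma homCount_eq_sum (F H : DotDiagram σ) :
    homCount F H = ∑ pqc : {pq : Set H.B × Set H.D // IsClosedPair H pq.1 pq.2},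
      surjCount F (restrict H pqc.1.1 pqc.1.2 pqc.2) := by
  have e1 : Hom F H ≃ Σ pqc : {pq : Set H.B × Set H.D // IsClosedPair H pq.1 pq.2},
      {Φ : Hom F H // rangePair Φ = pqc} := (Equiv.sigmaFiberEquiv rangePair).symm
  rw [homCount, Nat.card_congr e1, Nat.card_sigma']
  apply Finset.sum_congr rfl
  rintro ⟨⟨P, Q⟩, hc⟩ -
  rw [surjCount, ← Nat.card_congr (fiberEquiv F H P Q hc)]
  apply Nat.card_congr
  apply Equiv.subtypeEquivRight
  intro Φ
  constructor
  · intro h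
    have := congrArg Subtype.val h
    exact ⟨congrArg Prod.fst this, congrArg Prod.snd this⟩
  · rintro ⟨h1, h2⟩
    apply Subtype.ext
    simp only [rangePair]
    exact Prod.ext h1 h2

/-- The trivial closed pair. -/
lemma isClosedPair_univ (H : DotDiagram σ) : IsClosedPair H Set.univ Set.univ :=
  ⟨fun _ _ _ => trivial, fun _ _ _ => trivial, fun _ => trivial, fun _ => trivial⟩

noncomputable def restrictUnivEquiv (F H : DotDiagram σ) :
    {Ψ : Hom F (restrict H Set.univ Set.univ (isClosedPair_univ H)) // Ψ.Surj} ≃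
    {Φ : Hom F H // Φ.Surj} where
  toFun Ψ := ⟨(inclusionHom H _ _ _).comp Ψ.1, by
    constructor
    · intro b'
      obtain ⟨b, hb⟩ := Ψ.2.1 ⟨b', trivial⟩
      exact ⟨b, congrArg Subtype.val hb⟩
    · intro d'
      obtain ⟨d, hd⟩ := Ψ.2.2 ⟨d', trivial⟩
      exact ⟨d, congrArg Subtype.val hd⟩⟩
  invFun Φ := ⟨corestrictTo Φ.1 _ _ (isClosedPair_univ H) (fun _ => trivial) (fun _ => trivial), by
    constructor
    · rintro ⟨b', -⟩
      obtain ⟨b, hb⟩ := Φ.2.1 b'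
      exact ⟨b, Subtype.ext hb⟩
    · rintro ⟨d', -⟩
      obtain ⟨d, hd⟩ := Φ.2.2 d'
      exact ⟨d, Subtype.ext hd⟩⟩
  left_inv Ψ := Subtype.ext (Hom.ext' rfl rfl)
  right_inv Φ := Subtype.ext (Hom.ext' rfl rfl)

lemma surjCount_restrict_univ (F H : DotDiagram σ) :
    surjCount F (restrict H Set.univ Set.univ (isClosedPair_univ H)) = surjCount F H :=
  Nat.card_congr (restrictUnivEquiv F H)

end DotDiagram

section CastHelpers

lemma List.get_cast' {α : Type} {l l' : List α} (h : l = l') (i : Fin l.length) :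
    l.get i = l'.get (Fin.cast (by rw [h]) i) := by subst h; rfl

lemma cast_val_eq {β α : Type} (r : β → α) {A A' : α} (h : A = A')
    (e : {d : β // r d = A} = {d : β // r d = A'}) (z : {d : β // r d = A}) :
    (cast e z).1 = z.1 := by subst h; rfl

lemma pi_cast_fst {α β : Type} {r : β → α} {n m : ℕ} {l : Fin n → α} {l' : Fin m → α}
    (hn : m = n) (hl : ∀ i : Fin n, l i = l' (Fin.cast hn.symm i))
    (e : ((j : Fin m) → {d : β // r d = l' j}) = ((i : Fin n) → {d : β // r d = l i}))
    (y : (j : Fin m) → {d : β // r d = l' j}) (i : Fin n) :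
    (cast e y i).1 = (y (Fin.cast hn.symm i)).1 := by
  subst hn
  have h : l' = l := funext fun i => (hl i).symm
  subst h
  rfl

end CastHelpers

namespace DotDiagram

variable {σ : Signature}

/-- The number of boxes of `H` with label `f` and prescribed wires. -/
def cntType (H : DotDiagram σ) (f : σ.Mor)
    (x : Fin (σ.dom f).length → H.D) (y : Fin (σ.cod f).length → H.D) : Type :=
  {b : H.B // ∃ h : H.lb b = f,
    (∀ i, H.win b (Fin.cast (by rw [h]) i) = x i) ∧
    (∀ j, H.wout b (Fin.cast (by rw [h]) j) = y j)}

instance cntTypeFinite (H : DotDiagram σ) (f : σ.Mor)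
    (x : Fin (σ.dom f).length → H.D) (y : Fin (σ.cod f).length → H.D) :
    Finite (cntType H f x y) := by
  unfold cntType; infer_instance

noncomputable def cnt (H : DotDiagram σ) (f : σ.Mor)
    (x : Fin (σ.dom f).length → H.D) (y : Fin (σ.cod f).length → H.D) : ℕ :=
  Nat.card (cntType H f x y)

lemma cnt_congr (H : DotDiagram σ) {f f' : σ.Mor} (h : f = f')
    (x : Fin (σ.dom f).length → H.D) (y : Fin (σ.cod f).length → H.D) :
    cnt H f x y = cnt H f'
      (fun i => x (Fin.cast (by rw [h]) i)) (fun j => y (Fin.cast (by rw [h]) j)) := by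
  subst h; rfl

end DotDiagram

namespace DotDiagram

variable {σd : DaggerSignature}

/-- The symmetrized counting interpretation associated to a diagram `H` and scalar `lam`. -/
noncomputable def MH (H : DotDiagram σd.toSignature) (K : Type) [Field K]
    (conj : K →+* K) (lam : K) : Interp σd.toSignature K where
  car A := {d : H.D // H.ld d = A}
  finCar A := Subtype.fintype _
  val f x y :=
    lam * (cnt H f (fun i => (x i).1) (fun j => (y j).1) : K) +
    conj lam * (cnt H (σd.dag f)
      (fun i => (y (Fin.cast (by rw [σd.dom_dag]) i)).1)
      (fun j => (x (Fin.cast (by rw [σd.cod_dag]) j)).1) : K)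

lemma MH_isDagger (H : DotDiagram σd.toSignature) (K : Type) [Field K] (conj : K →+* K)
    (hinv : ∀ x : K, conj (conj x) = x) (lam : K) :
    (MH H K conj lam).IsDagger conj := by
  intro f x y
  have hY : ∀ i : Fin (σd.toSignature.dom (σd.dag f)).length,
      (cast (show ((j : Fin (σd.toSignature.cod f).length) →
            (MH H K conj lam).car ((σd.toSignature.cod f).get j)) =
          ((i : Fin (σd.toSignature.dom (σd.dag f)).length) →
            (MH H K conj lam).car ((σd.toSignature.dom (σd.dag f)).get i))
          by rw [σd.dom_dag]) y i).1
      = (y (Fin.cast (show (σd.toSignature.dom (σd.dag f)).length =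
          (σd.toSignature.cod f).length by rw [σd.dom_dag]) i)).1 :=
    fun i => pi_cast_fst (r := H.ld) (hn := by rw [σd.dom_dag])
      (fun i => List.get_cast' (σd.dom_dag f) i) _ y i
  have hX : ∀ j : Fin (σd.toSignature.cod (σd.dag f)).length,
      (cast (show ((i : Fin (σd.toSignature.dom f).length) →
            (MH H K conj lam).car ((σd.toSignature.dom f).get i)) =
          ((j : Fin (σd.toSignature.cod (σd.dag f)).length) →
            (MH H K conj lam).car ((σd.toSignature.cod (σd.dag f)).get j))
          by rw [σd.cod_dag]) x j).1
      = (x (Fin.cast (show (σd.toSignature.cod (σd.dag f)).length =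
          (σd.toSignature.dom f).length by rw [σd.cod_dag]) j)).1 :=
    fun j => pi_cast_fst (r := H.ld) (hn := by rw [σd.cod_dag])
      (fun j => List.get_cast' (σd.cod_dag f) j) _ x j
  show lam * _ + conj lam * _ = conj (lam * _ + conj lam * _)
  simp only [hY, hX]
  rw [map_add, map_mul, map_mul, hinv, map_natCast, map_natCast,
    add_comm (conj lam * _), cnt_congr H (σd.dag_dag f)]
  rfl

end DotDiagram

namespace DotDiagram

variable {σd : DaggerSignature}

/-- The boundary-compatibility condition for a dot assignment. -/
def bcond (F' H : DotDiagram σd.toSignature) (e1 : F'.nIn = H.nIn) (e2 : F'.nOut = H.nOut)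
    (φ : (d : F'.D) → {d' : H.D // H.ld d' = F'.ld d}) : Prop :=
  (∀ k, (φ (F'.pin k)).1 = H.pin (Fin.cast e1 k)) ∧
  (∀ l, (φ (F'.pout l)).1 = H.pout (Fin.cast e2 l))

/-- The twisted-homomorphism count indexed by a set `t` of straight boxes. -/
noncomputable def NN (F' H : DotDiagram σd.toSignature)
    (e1 : F'.nIn = H.nIn) (e2 : F'.nOut = H.nOut) (t : Finset F'.B) : ℕ :=
  ∑ φ : (d : F'.D) → {d' : H.D // H.ld d' = F'.ld d},
    if bcond F' H e1 e2 φ then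
      (∏ b ∈ t, cnt H (F'.lb b)
          (fun i => (φ (F'.win b i)).1) (fun j => (φ (F'.wout b j)).1)) *
      ∏ b ∈ tᶜ, cnt H (σd.dag (F'.lb b))
          (fun i => (φ (F'.wout b (Fin.cast (by rw [σd.dom_dag]) i))).1)
          (fun j => (φ (F'.win b (Fin.cast (by rw [σd.cod_dag]) j))).1)
    else 0

variable {K : Type} [Field K]

lemma boxEntry_MH (H F' : DotDiagram σd.toSignature) (conj : K →+* K) (lam : K)
    (φ : (d : F'.D) → (MH H K conj lam).car (F'.ld d)) (b : F'.B) :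
    Interp.boxEntry (MH H K conj lam) F' φ b =
      lam * (cnt H (F'.lb b)
          (fun i => (φ (F'.win b i)).1) (fun j => (φ (F'.wout b j)).1) : K) +
      conj lam * (cnt H (σd.dag (F'.lb b))
          (fun i => (φ (F'.wout b (Fin.cast (by rw [σd.dom_dag]) i))).1)
          (fun j => (φ (F'.win b (Fin.cast (by rw [σd.cod_dag]) j))).1) : K) := by
  have hX : ∀ i, ((cast (congrArg (MH H K conj lam).car (F'.tyIn b i))
      (φ (F'.win b i))).1 : H.D) = (φ (F'.win b i)).1 :=
    fun i => cast_val_eq H.ld (F'.tyIn b i) _ _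
  have hY : ∀ j, ((cast (congrArg (MH H K conj lam).car (F'.tyOut b j))
      (φ (F'.wout b j))).1 : H.D) = (φ (F'.wout b j)).1 :=
    fun j => cast_val_eq H.ld (F'.tyOut b j) _ _
  show lam * _ + conj lam * _ = lam * _ + conj lam * _
  simp only [hX, hY]

end DotDiagram

namespace DotDiagram

variable {σd : DaggerSignature} {K : Type} [Field K]

lemma valueMatrix_MH (H F' : DotDiagram σd.toSignature)
    (e1 : F'.nIn = H.nIn) (e2 : F'.nOut = H.nOut) (conj : K →+* K) (lam : K) :
    (MH H K conj lam).valueMatrix F'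
      (fun k => ⟨H.ld (H.pin (Fin.cast e1 k)), ⟨H.pin (Fin.cast e1 k), rfl⟩⟩)
      (fun l => ⟨H.ld (H.pout (Fin.cast e2 l)), ⟨H.pout (Fin.cast e2 l), rfl⟩⟩)
    = ∑ t : Finset F'.B, lam ^ t.card * conj lam ^ tᶜ.card * (NN F' H e1 e2 t : K) := by
  rw [Interp.valueMatrix]
  have hcond : ∀ φ : (d : F'.D) → (MH H K conj lam).car (F'.ld d),
      ((∀ k, (⟨F'.ld (F'.pin k), φ (F'.pin k)⟩ : Σ A : σd.toSignature.Obj,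
          (MH H K conj lam).car A) =
          ⟨H.ld (H.pin (Fin.cast e1 k)), ⟨H.pin (Fin.cast e1 k), rfl⟩⟩) ∧
       (∀ l, (⟨F'.ld (F'.pout l), φ (F'.pout l)⟩ : Σ A : σd.toSignature.Obj,
          (MH H K conj lam).car A) =
          ⟨H.ld (H.pout (Fin.cast e2 l)), ⟨H.pout (Fin.cast e2 l), rfl⟩⟩))
      ↔ bcond F' H e1 e2 φ := by
    intro φ
    have single : ∀ (A : σd.toSignature.Obj) (z : (MH H K conj lam).car A) (d₀ : H.D),
        ((⟨A, z⟩ : Σ A : σd.toSignature.Obj, (MH H K conj lam).car A) =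
          ⟨H.ld d₀, ⟨d₀, rfl⟩⟩) ↔ z.1 = d₀ := by
      intro A z d₀
      constructor
      · intro h
        exact congrArg (fun p : (Σ A : σd.toSignature.Obj, (MH H K conj lam).car A) =>
          p.2.1) h
      · rintro rfl
        obtain ⟨d, hd⟩ := z
        dsimp only
        subst hd
        rfl
    unfold bcond
    rw [forall_congr' (fun k => single _ _ _), forall_congr' (fun l => single _ _ _)]
  have key : ∀ φ : (d : F'.D) → (MH H K conj lam).car (F'.ld d),
      (∏ b, Interp.boxEntry (MH H K conj lam) F' φ b) =
      ∑ t : Finset F'.B,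
        (∏ b ∈ t, lam * (cnt H (F'.lb b)
            (fun i => (φ (F'.win b i)).1) (fun j => (φ (F'.wout b j)).1) : K)) *
        ∏ b ∈ tᶜ, conj lam * (cnt H (σd.dag (F'.lb b))
            (fun i => (φ (F'.wout b (Fin.cast (by rw [σd.dom_dag]) i))).1)
            (fun j => (φ (F'.win b (Fin.cast (by rw [σd.cod_dag]) j))).1) : K) := by
    intro φ
    simp only [boxEntry_MH]
    exact Fintype.prod_add _ _
  calc ∑ φ : (d : F'.D) → (MH H K conj lam).car (F'.ld d), _ =
      ∑ φ : (d : F'.D) → (MH H K conj lam).car (F'.ld d), ∑ t : Finset F'.B,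
        if bcond F' H e1 e2 φ then
          (∏ b ∈ t, lam * (cnt H (F'.lb b)
              (fun i => (φ (F'.win b i)).1) (fun j => (φ (F'.wout b j)).1) : K)) *
          ∏ b ∈ tᶜ, conj lam * (cnt H (σd.dag (F'.lb b))
              (fun i => (φ (F'.wout b (Fin.cast (by rw [σd.dom_dag]) i))).1)
              (fun j => (φ (F'.win b (Fin.cast (by rw [σd.cod_dag]) j))).1) : K)
        else 0 := by
        apply Finset.sum_congr rfl
        intro φ _
        rw [if_congr (hcond φ) rfl rfl, key φ]
        split
        · rfl
        · simp
    _ = _ := by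
        rw [Finset.sum_comm]
        apply Finset.sum_congr rfl
        intro t _
        rw [NN]
        push_cast
        rw [Finset.mul_sum]
        apply Finset.sum_congr rfl
        intro φ _
        rw [mul_ite, mul_zero]
        apply if_congr Iff.rfl _ rfl
        rw [Finset.prod_mul_distrib, Finset.prod_mul_distrib,
          Finset.prod_const, Finset.prod_const]
        ring
end DotDiagram

lemma Nat.card_plift_prop (p : Prop) : Nat.card (PLift p) = if p then 1 else 0 := by
  by_cases h : p
  · haveI : Nonempty (PLift p) := ⟨⟨h⟩⟩
    haveI : Subsingleton (PLift p) := ⟨fun a b => by cases a; cases b; rfl⟩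
    rw [if_pos h, Nat.card_unique]
  · haveI : IsEmpty (PLift p) := ⟨fun x => h x.down⟩
    rw [if_neg h, Nat.card_of_isEmpty]

namespace DotDiagram

variable {σd : DaggerSignature}

/-- Homs `F' → H` are pairs of a dot assignment compatible with the boundary and,
for each box, a matching box. -/
noncomputable def homEquivCount (F' H : DotDiagram σd.toSignature)
    (e1 : F'.nIn = H.nIn) (e2 : F'.nOut = H.nOut) :
    Hom F' H ≃ Σ φ : (d : F'.D) → {d' : H.D // H.ld d' = F'.ld d},
      PLift (bcond F' H e1 e2 φ) × ((b : F'.B) → cntType H (F'.lb b)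
        (fun i => (φ (F'.win b i)).1) (fun j => (φ (F'.wout b j)).1)) where
  toFun Φ := ⟨fun d => ⟨Φ.onD d, Φ.map_ld d⟩,
    ⟨PLift.up ⟨fun k => Φ.map_pin k, fun l => Φ.map_pout l⟩,
     fun b => ⟨Φ.onB b, Φ.map_lb b, fun i => Φ.map_win b i, fun j => Φ.map_wout b j⟩⟩⟩
  invFun p :=
    { onB := fun b => (p.2.2 b).1
      onD := fun d => (p.1 d).1
      map_lb := fun b => (p.2.2 b).2.choose
      map_ld := fun d => (p.1 d).2
      map_win := fun b i => (p.2.2 b).2.choose_spec.1 i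
      map_wout := fun b j => (p.2.2 b).2.choose_spec.2 j
      eq_nIn := e1
      eq_nOut := e2
      map_pin := fun k => p.2.1.down.1 k
      map_pout := fun l => p.2.1.down.2 l }
  left_inv Φ := Hom.ext' rfl rfl
  right_inv p := rfl

lemma NN_univ (F' H : DotDiagram σd.toSignature)
    (e1 : F'.nIn = H.nIn) (e2 : F'.nOut = H.nOut) :
    NN F' H e1 e2 Finset.univ = homCount F' H := by
  rw [NN, homCount, Nat.card_congr (homEquivCount F' H e1 e2), Nat.card_sigma']
  apply Finset.sum_congr rfl
  intro φ _
  rw [Nat.card_prod, Nat.card_plift_prop]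
  by_cases h : bcond F' H e1 e2 φ
  · rw [if_pos h, if_pos h, one_mul, Finset.compl_univ, Finset.prod_empty, mul_one,
      Nat.card_pi]
    rfl
  · rw [if_neg h, if_neg h, zero_mul]

end DotDiagram

section Forward

variable {σ : Signature} {R : Type} [CommSemiring R]

lemma Interp.val_congr (M : Interp σ R) {f f' : σ.Mor} (h : f = f')
    (x : (i : Fin (σ.dom f).length) → M.car ((σ.dom f).get i))
    (y : (j : Fin (σ.cod f).length) → M.car ((σ.cod f).get j)) :
    M.val f x y = M.val f'
      (fun i => cast (congrArg M.car
          (List.get_cast' (show σ.dom f = σ.dom f' by rw [h]) (Fin.cast (by rw [h]) i)))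
        (x (Fin.cast (by rw [h]) i)))
      (fun j => cast (congrArg M.car
          (List.get_cast' (show σ.cod f = σ.cod f' by rw [h]) (Fin.cast (by rw [h]) j)))
        (y (Fin.cast (by rw [h]) j))) := by
  subst h; rfl

lemma sigma_cast_eq {α : Type} {C : α → Type} {A A' : α} (h : A = A') (z : C A) :
    (⟨A', cast (congrArg C h) z⟩ : Σ a : α, C a) = ⟨A, z⟩ := by
  subst h; rfl

open DotDiagram in
lemma valueMatrix_congr_iso (M : Interp σ R) (F G : DotDiagram σ) (Φ : Hom F G)
    (hB : Function.Bijective Φ.onB) (hD : Function.Bijective Φ.onD)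
    (x : Fin F.nIn → (Σ A : σ.Obj, M.car A)) (y : Fin F.nOut → (Σ A : σ.Obj, M.car A)) :
    M.valueMatrix F x y = M.valueMatrix G (fun k => x (Fin.cast Φ.eq_nIn.symm k))
      (fun l => y (Fin.cast Φ.eq_nOut.symm l)) := by
  classical
  set eD := Equiv.ofBijective _ hD with heD
  set eB := Equiv.ofBijective _ hB with heB
  set Θ : ((d : F.D) → M.car (F.ld d)) ≃ ((d' : G.D) → M.car (G.ld d')) :=
    eD.piCongr (fun d => Equiv.cast (congrArg M.car (Φ.map_ld d).symm)) with hΘ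
  have hΘapp : ∀ (φ : (d : F.D) → M.car (F.ld d)) (d : F.D),
      Θ φ (Φ.onD d) = cast (congrArg M.car (Φ.map_ld d).symm) (φ d) := by
    intro φ d
    exact eD.piCongr_apply_apply _ φ d
  have hpair : ∀ (φ : (d : F.D) → M.car (F.ld d)) (d : F.D),
      (⟨G.ld (Φ.onD d), Θ φ (Φ.onD d)⟩ : Σ A : σ.Obj, M.car A) = ⟨F.ld d, φ d⟩ := by
    intro φ d
    rw [hΘapp]
    exact sigma_cast_eq (Φ.map_ld d).symm (φ d)
  rw [Interp.valueMatrix, Interp.valueMatrix]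
  apply Fintype.sum_equiv Θ
  intro φ
  have hcond : ((∀ k, (⟨F.ld (F.pin k), φ (F.pin k)⟩ : Σ A : σ.Obj, M.car A) = x k) ∧
      (∀ l, (⟨F.ld (F.pout l), φ (F.pout l)⟩ : Σ A : σ.Obj, M.car A) = y l)) ↔
      ((∀ k, (⟨G.ld (G.pin k), Θ φ (G.pin k)⟩ : Σ A : σ.Obj, M.car A) =
          x (Fin.cast Φ.eq_nIn.symm k)) ∧
       (∀ l, (⟨G.ld (G.pout l), Θ φ (G.pout l)⟩ : Σ A : σ.Obj, M.car A) =
          y (Fin.cast Φ.eq_nOut.symm l))) := by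
    constructor
    · rintro ⟨h1, h2⟩
      constructor
      · intro k
        have hk : G.pin k = Φ.onD (F.pin (Fin.cast Φ.eq_nIn.symm k)) :=
          (Φ.map_pin (Fin.cast Φ.eq_nIn.symm k)).symm
        rw [hk, hpair]
        exact h1 _
      · intro l
        have hl : G.pout l = Φ.onD (F.pout (Fin.cast Φ.eq_nOut.symm l)) :=
          (Φ.map_pout (Fin.cast Φ.eq_nOut.symm l)).symm
        rw [hl, hpair]
        exact h2 _
    · rintro ⟨h1, h2⟩
      constructor
      · intro k
        have := h1 (Fin.cast Φ.eq_nIn k)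
        rw [show G.pin (Fin.cast Φ.eq_nIn k) = Φ.onD (F.pin k) from (Φ.map_pin k).symm,
          hpair] at this
        exact this
      · intro l
        have := h2 (Fin.cast Φ.eq_nOut l)
        rw [show G.pout (Fin.cast Φ.eq_nOut l) = Φ.onD (F.pout l) from (Φ.map_pout l).symm,
          hpair] at this
        exact this
  rw [if_congr hcond rfl rfl]
  apply if_congr Iff.rfl _ rfl
  apply Fintype.prod_equiv eB
  intro b
  show Interp.boxEntry M F φ b = Interp.boxEntry M G (Θ φ) (Φ.onB b)
  rw [Interp.boxEntry, Interp.boxEntry, Interp.val_congr M (Φ.map_lb b)]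
  congr 1
  · funext i
    rw [cast_eq_iff_heq]
    refine HEq.trans ?_ ((cast_heq _ _).trans (cast_heq _ _)).symm
    have hw : G.win (Φ.onB b) (Fin.cast (by rw [Φ.map_lb b]) i) = Φ.onD (F.win b i) :=
      Φ.map_win b i
    rw [hw, hΘapp]
    exact (cast_heq _ _).symm
  · funext j
    rw [cast_eq_iff_heq]
    refine HEq.trans ?_ ((cast_heq _ _).trans (cast_heq _ _)).symm
    have hw : G.wout (Φ.onB b) (Fin.cast (by rw [Φ.map_lb b]) j) = Φ.onD (F.wout b j) :=
      Φ.map_wout b j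
    rw [hw, hΘapp]
    exact (cast_heq _ _).symm

end Forward

namespace DotDiagram

variable {σd : DaggerSignature}

lemma homCount_key (K : Type) [Field K] [CharZero K] (conj : K →+* K)
    (hinv : ∀ x : K, conj (conj x) = x) (hnontriv : ∃ x : K, conj x ≠ x)
    (F G : DotDiagram σd.toSignature)
    (hIn : F.nIn = G.nIn) (hOut : F.nOut = G.nOut)
    (hM : ∀ (M : Interp σd.toSignature K), M.IsDagger conj →
        ∀ (x : Fin F.nIn → (Σ A : σd.toSignature.Obj, M.car A))
          (y : Fin F.nOut → (Σ A : σd.toSignature.Obj, M.car A)),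
        M.valueMatrix F x y =
          M.valueMatrix G (fun k => x (Fin.cast hIn.symm k))
            (fun l => y (Fin.cast hOut.symm l)))
    (H : DotDiagram σd.toSignature) :
    homCount F H * 2 ^ Fintype.card F.B = homCount G H * 2 ^ Fintype.card G.B := by
  by_cases hn : F.nIn = H.nIn ∧ F.nOut = H.nOut
  case neg =>
    have hF : IsEmpty (Hom F H) := ⟨fun Φ => hn ⟨Φ.eq_nIn, Φ.eq_nOut⟩⟩
    have hG : IsEmpty (Hom G H) := ⟨fun Φ => hn ⟨hIn.trans Φ.eq_nIn, hOut.trans Φ.eq_nOut⟩⟩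
    rw [homCount, homCount, Nat.card_of_isEmpty, Nat.card_of_isEmpty, zero_mul, zero_mul]
  case pos =>
  obtain ⟨e1, e2⟩ := hn
  have e1' : G.nIn = H.nIn := hIn ▸ e1
  have e2' : G.nOut = H.nOut := hOut ▸ e2
  obtain ⟨u, hu⟩ := hnontriv
  set t₀ : K := u - conj u with ht₀
  have ht₀ne : t₀ ≠ 0 := sub_ne_zero_of_ne (Ne.symm hu)
  have hconjt₀ : conj t₀ = -t₀ := by rw [ht₀, map_sub, hinv, neg_sub]
  set P : Polynomial K := ∑ t : Finset F.B,
    Polynomial.X ^ t.card * (Polynomial.C 2 - Polynomial.X) ^ tᶜ.card *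
      Polynomial.C (NN F H e1 e2 t : K) with hP
  set Q : Polynomial K := ∑ t : Finset G.B,
    Polynomial.X ^ t.card * (Polynomial.C 2 - Polynomial.X) ^ tᶜ.card *
      Polynomial.C (NN G H e1' e2' t : K) with hQ
  have heval : ∀ lam : K, conj lam = 2 - lam →
      Polynomial.eval lam P = Polynomial.eval lam Q := by
    intro lam hlam
    have h1 := hM (MH H K conj lam) (MH_isDagger H K conj hinv lam)
      (fun k => ⟨H.ld (H.pin (Fin.cast e1 k)), ⟨H.pin (Fin.cast e1 k), rfl⟩⟩)
      (fun l => ⟨H.ld (H.pout (Fin.cast e2 l)), ⟨H.pout (Fin.cast e2 l), rfl⟩⟩)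
    rw [valueMatrix_MH H F e1 e2 conj lam] at h1
    rw [show (fun k : Fin G.nIn =>
        (fun k : Fin F.nIn => (⟨H.ld (H.pin (Fin.cast e1 k)),
          ⟨H.pin (Fin.cast e1 k), rfl⟩⟩ : Σ A : σd.toSignature.Obj,
            (MH H K conj lam).car A)) (Fin.cast hIn.symm k)) =
        (fun k : Fin G.nIn => ⟨H.ld (H.pin (Fin.cast e1' k)),
          ⟨H.pin (Fin.cast e1' k), rfl⟩⟩) from rfl,
      show (fun l : Fin G.nOut =>
        (fun l : Fin F.nOut => (⟨H.ld (H.pout (Fin.cast e2 l)),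
          ⟨H.pout (Fin.cast e2 l), rfl⟩⟩ : Σ A : σd.toSignature.Obj,
            (MH H K conj lam).car A)) (Fin.cast hOut.symm l)) =
        (fun l : Fin G.nOut => ⟨H.ld (H.pout (Fin.cast e2' l)),
          ⟨H.pout (Fin.cast e2' l), rfl⟩⟩) from rfl] at h1
    rw [valueMatrix_MH H G e1' e2' conj lam] at h1
    simp only [hP, hQ, Polynomial.eval_finset_sum, Polynomial.eval_mul, Polynomial.eval_pow,
      Polynomial.eval_sub, Polynomial.eval_C, Polynomial.eval_X]
    rw [show (2 : K) - lam = conj lam from hlam.symm]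
    exact h1
  have hroots : P = Q := by
    rw [← sub_eq_zero]
    apply Polynomial.eq_zero_of_infinite_isRoot
    apply Set.Infinite.mono (s := Set.range (fun q : ℕ => 1 + (q : K) * t₀))
    · rintro z ⟨q, rfl⟩
      simp only [Set.mem_setOf_eq, Polynomial.IsRoot, Polynomial.eval_sub]
      rw [heval (1 + (q : K) * t₀)
        (by rw [map_add, map_one, map_mul, map_natCast, hconjt₀]; ring)]
      exact sub_self _
    · apply Set.infinite_range_of_injective
      intro a b hab
      simp only [add_right_inj] at hab
      exact_mod_cast mul_right_cancel₀ ht₀ne hab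
  have hPeval : Polynomial.eval 2 P = (homCount F H : K) * 2 ^ Fintype.card F.B := by
    rw [hP, Polynomial.eval_finset_sum]
    rw [Finset.sum_eq_single Finset.univ]
    · rw [Polynomial.eval_mul, Polynomial.eval_mul, Polynomial.eval_pow,
        Polynomial.eval_pow, Polynomial.eval_sub, Polynomial.eval_C, Polynomial.eval_X,
        Finset.compl_univ, Finset.card_empty, pow_zero, mul_one, NN_univ,
        Finset.card_univ, Polynomial.eval_C, mul_comm]
    · intro t _ hne
      have hc : tᶜ.card ≠ 0 := by
        have := (Finset.card_lt_iff_ne_univ t).mpr hne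
        rw [Finset.card_compl]
        omega
      rw [Polynomial.eval_mul, Polynomial.eval_mul, Polynomial.eval_pow,
        Polynomial.eval_pow, Polynomial.eval_sub, Polynomial.eval_C, Polynomial.eval_X,
        sub_self, zero_pow hc, mul_zero, zero_mul]
    · intro h
      exact absurd (Finset.mem_univ _) h
  have hQeval : Polynomial.eval 2 Q = (homCount G H : K) * 2 ^ Fintype.card G.B := by
    rw [hQ, Polynomial.eval_finset_sum]
    rw [Finset.sum_eq_single Finset.univ]
    · rw [Polynomial.eval_mul, Polynomial.eval_mul, Polynomial.eval_pow,
        Polynomial.eval_pow, Polynomial.eval_sub, Polynomial.eval_C, Polynomial.eval_X,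
        Finset.compl_univ, Finset.card_empty, pow_zero, mul_one, NN_univ,
        Finset.card_univ, Polynomial.eval_C, mul_comm]
    · intro t _ hne
      have hc : tᶜ.card ≠ 0 := by
        have := (Finset.card_lt_iff_ne_univ t).mpr hne
        rw [Finset.card_compl]
        omega
      rw [Polynomial.eval_mul, Polynomial.eval_mul, Polynomial.eval_pow,
        Polynomial.eval_pow, Polynomial.eval_sub, Polynomial.eval_C, Polynomial.eval_X,
        sub_self, zero_pow hc, mul_zero, zero_mul]
    · intro h
      exact absurd (Finset.mem_univ _) h
  have h2 : (homCount F H : K) * 2 ^ Fintype.card F.B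
      = (homCount G H : K) * 2 ^ Fintype.card G.B := by
    rw [← hPeval, ← hQeval, hroots]
  exact_mod_cast h2

end DotDiagram

namespace DotDiagram

lemma restrict_measure_lt {σ : Signature} (H : DotDiagram σ) (P : Set H.B) (Q : Set H.D)
    (hc : IsClosedPair H P Q) (hne : P ≠ Set.univ ∨ Q ≠ Set.univ) :
    Nat.card (restrict H P Q hc).B + Nat.card (restrict H P Q hc).D <
      Nat.card H.B + Nat.card H.D := by
  have hB : Nat.card (restrict H P Q hc).B = P.ncard := Nat.card_coe_set_eq P
  have hD : Nat.card (restrict H P Q hc).D = Q.ncard := Nat.card_coe_set_eq Q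
  have h1 : P.ncard ≤ Nat.card H.B := by
    rw [← Set.ncard_univ]; exact Set.ncard_le_ncard (Set.subset_univ P) Set.finite_univ
  have h2 : Q.ncard ≤ Nat.card H.D := by
    rw [← Set.ncard_univ]; exact Set.ncard_le_ncard (Set.subset_univ Q) Set.finite_univ
  rcases hne with h | h
  · have h3 : P.ncard < Nat.card H.B := by
      rw [← Set.ncard_univ]
      exact Set.ncard_lt_ncard (Set.ssubset_univ_iff.mpr h) Set.finite_univ
    omega
  · have h3 : Q.ncard < Nat.card H.D := by
      rw [← Set.ncard_univ]
      exact Set.ncard_lt_ncard (Set.ssubset_univ_iff.mpr h) Set.finite_univ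
    omega

variable {σd : DaggerSignature}

lemma surjCount_key (F G : DotDiagram σd.toSignature)
    (hkey : ∀ H : DotDiagram σd.toSignature,
      homCount F H * 2 ^ Fintype.card F.B = homCount G H * 2 ^ Fintype.card G.B) :
    ∀ H : DotDiagram σd.toSignature,
      surjCount F H * 2 ^ Fintype.card F.B = surjCount G H * 2 ^ Fintype.card G.B := by
  have main : ∀ (N : ℕ) (H : DotDiagram σd.toSignature),
      Nat.card H.B + Nat.card H.D ≤ N →
      surjCount F H * 2 ^ Fintype.card F.B = surjCount G H * 2 ^ Fintype.card G.B := by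
    intro N
    induction N using Nat.strong_induction_on with
    | _ N IH =>
      intro H hN
      have hsum : ∑ pqc : {pq : Set H.B × Set H.D // IsClosedPair H pq.1 pq.2},
            surjCount F (restrict H pqc.1.1 pqc.1.2 pqc.2) * 2 ^ Fintype.card F.B =
          ∑ pqc : {pq : Set H.B × Set H.D // IsClosedPair H pq.1 pq.2},
            surjCount G (restrict H pqc.1.1 pqc.1.2 pqc.2) * 2 ^ Fintype.card G.B := by
        rw [← Finset.sum_mul, ← Finset.sum_mul, ← homCount_eq_sum F H, ← homCount_eq_sum G H]
        exact hkey H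
      have htopmem : (⟨(Set.univ, Set.univ), isClosedPair_univ H⟩ :
          {pq : Set H.B × Set H.D // IsClosedPair H pq.1 pq.2}) ∈ Finset.univ :=
        Finset.mem_univ _
      rw [← Finset.add_sum_erase _ _ htopmem, ← Finset.add_sum_erase _ _ htopmem] at hsum
      have herase : ∑ pqc ∈ Finset.univ.erase
            (⟨(Set.univ, Set.univ), isClosedPair_univ H⟩ :
              {pq : Set H.B × Set H.D // IsClosedPair H pq.1 pq.2}),
            surjCount F (restrict H pqc.1.1 pqc.1.2 pqc.2) * 2 ^ Fintype.card F.B =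
          ∑ pqc ∈ Finset.univ.erase
            (⟨(Set.univ, Set.univ), isClosedPair_univ H⟩ :
              {pq : Set H.B × Set H.D // IsClosedPair H pq.1 pq.2}),
            surjCount G (restrict H pqc.1.1 pqc.1.2 pqc.2) * 2 ^ Fintype.card G.B := by
        apply Finset.sum_congr rfl
        intro pqc hmem
        have hne := Finset.ne_of_mem_erase hmem
        have hne' : pqc.1.1 ≠ Set.univ ∨ pqc.1.2 ≠ Set.univ := by
          by_contra hcon
          push_neg at hcon
          exact hne (Subtype.ext (Prod.ext hcon.1 hcon.2))
        have hlt := restrict_measure_lt H pqc.1.1 pqc.1.2 pqc.2 hne'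
        exact IH (Nat.card (restrict H pqc.1.1 pqc.1.2 pqc.2).B +
            Nat.card (restrict H pqc.1.1 pqc.1.2 pqc.2).D)
          (lt_of_lt_of_le hlt hN) _ le_rfl
      rw [herase] at hsum
      have hcancel := Nat.add_right_cancel hsum
      have hFr : surjCount F (restrict H Set.univ Set.univ (isClosedPair_univ H)) *
          2 ^ Fintype.card F.B = surjCount F H * 2 ^ Fintype.card F.B := by
        rw [surjCount_restrict_univ]
      have hGr : surjCount G (restrict H Set.univ Set.univ (isClosedPair_univ H)) *
          2 ^ Fintype.card G.B = surjCount G H * 2 ^ Fintype.card G.B := by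
        rw [surjCount_restrict_univ]
      exact (hFr.symm.trans hcancel).trans hGr
  intro H
  exact main _ H le_rfl

end DotDiagram

/-- The completeness theorem for dagger-hypergraph categories: over a field `K` of
characteristic `0` with a nontrivial involution, two dot-diagrams over a dagger signature
with the same input list and the same output list are isomorphic iff their value matrices
agree under every dagger interpretation of the signature over `K`. -/
theorem DotDiagram.dagger_completeness {σ : DaggerSignature}
    (K : Type) [Field K] [CharZero K] (conj : K →+* K)
    (hinv : ∀ x : K, conj (conj x) = x) (hnontriv : ∃ x : K, conj x ≠ x)
    (F G : DotDiagram σ.toSignature)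
    (hIn : F.nIn = G.nIn) (hOut : F.nOut = G.nOut)
    (hlIn : ∀ k, F.ld (F.pin k) = G.ld (G.pin (Fin.cast hIn k)))
    (hlOut : ∀ l, F.ld (F.pout l) = G.ld (G.pout (Fin.cast hOut l))) :
    DotDiagram.Isomorphic F G ↔
      ∀ (M : Interp σ.toSignature K), M.IsDagger conj →
        ∀ (x : Fin F.nIn → (Σ A : σ.toSignature.Obj, M.car A))
          (y : Fin F.nOut → (Σ A : σ.toSignature.Obj, M.car A)),
        M.valueMatrix F x y =
          M.valueMatrix G (fun k => x (Fin.cast hIn.symm k))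
            (fun l => y (Fin.cast hOut.symm l)) := by
  constructor
  · rintro ⟨Φ, hB, hD⟩ M _ x y
    exact valueMatrix_congr_iso M F G Φ hB hD x y
  · intro hM
    have hkey := fun H => homCount_key K conj hinv hnontriv F G hIn hOut hM H
    have hsurj := surjCount_key F G hkey
    have hGG : 0 < surjCount G G := by
      have : Nonempty {Φ : Hom G G // Φ.Surj} :=
        ⟨⟨Hom.idHom G, Function.surjective_id, Function.surjective_id⟩⟩
      exact Nat.card_pos
    have hFF : 0 < surjCount F F := by
      have : Nonempty {Φ : Hom F F // Φ.Surj} :=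
        ⟨⟨Hom.idHom F, Function.surjective_id, Function.surjective_id⟩⟩
      exact Nat.card_pos
    have h1 := hsurj G
    have h2 := hsurj F
    have hFG : surjCount F G ≠ 0 := by
      intro h0
      rw [h0, zero_mul] at h1
      exact Nat.mul_ne_zero (Nat.pos_iff_ne_zero.mp hGG) (pow_ne_zero _ two_ne_zero) h1.symm
    have hGF : surjCount G F ≠ 0 := by
      intro h0
      rw [h0, zero_mul] at h2
      exact Nat.mul_ne_zero (Nat.pos_iff_ne_zero.mp hFF) (pow_ne_zero _ two_ne_zero) h2
    obtain ⟨⟨Φ, hΦ⟩⟩ := (Nat.card_ne_zero.mp hFG).1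
    obtain ⟨⟨Ψ, hΨ⟩⟩ := (Nat.card_ne_zero.mp hGF).1
    refine ⟨Φ, ?_, ?_⟩
    · exact (Fintype.bijective_iff_surjective_and_card Φ.onB).mpr ⟨hΦ.1,
        le_antisymm (Fintype.card_le_of_surjective _ hΨ.1)
          (Fintype.card_le_of_surjective _ hΦ.1)⟩
    · exact (Fintype.bijective_iff_surjective_and_card Φ.onD).mpr ⟨hΦ.2,
        le_antisymm (Fintype.card_le_of_surjective _ hΨ.2)
          (Fintype.card_le_of_surjective _ hΦ.2)⟩
end

section
/- Let K be a field of characteristic 0 equipped with a nontrivial involution x ↦ x̄ (a ring homomorphism with x̄̄ = x and x̄ ≠ x for some x). Let B be a finite set, and let p be a nonzero polynomial over ℤ in the variables {X_b : b ∈ B} ∪ {X̄_b : b ∈ B} (i.e. a nonzero element of the multivariate polynomial ring over ℤ with variable set B ⊕ B). Then there exists an assignment k : B → K such that evaluating p at X_b ↦ k(b) and X̄_b ↦ conjugate of k(b) yields a nonzero element of K. -/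
open MvPolynomial

private theorem subset_funext_fin {K : Type*} [Field K] {S : Set K} (hS : S.Infinite) :
    ∀ {n : ℕ} (p : MvPolynomial (Fin n) K),
      (∀ v : Fin n → K, (∀ i, v i ∈ S) → MvPolynomial.eval v p = 0) → p = 0 := by
  intro n
  induction n with
  | zero =>
    intro p h
    apply (MvPolynomial.isEmptyRingEquiv K (Fin 0)).injective
    rw [RingEquiv.map_zero]
    convert h finZeroElim (fun i => i.elim0)
    rw [← (isEmptyRingEquiv K (Fin 0)).symm_apply_apply p, RingEquiv.apply_symm_apply,
      isEmptyRingEquiv_symm_apply, eval_C]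
  | succ n ih =>
    intro p h
    apply (MvPolynomial.finSuccEquiv K n).injective
    rw [map_zero]
    ext i : 1
    rw [Polynomial.coeff_zero]
    apply ih
    intro v hv
    have key : Polynomial.map (MvPolynomial.eval v) (MvPolynomial.finSuccEquiv K n p) = 0 := by
      apply Polynomial.eq_zero_of_infinite_isRoot
      apply hS.mono
      intro y hy
      simp only [Set.mem_setOf_eq, Polynomial.IsRoot]
      rw [← MvPolynomial.eval_eq_eval_mv_eval']
      exact h (Fin.cons y v) (fun i => Fin.cases hy hv i)
    calc MvPolynomial.eval v ((MvPolynomial.finSuccEquiv K n p).coeff i)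
        = (Polynomial.map (MvPolynomial.eval v) (MvPolynomial.finSuccEquiv K n p)).coeff i := by
          rw [Polynomial.coeff_map]
      _ = 0 := by rw [key, Polynomial.coeff_zero]

private theorem subset_funext {K : Type*} [Field K] {S : Set K} (hS : S.Infinite)
    {σ : Type*} (p : MvPolynomial σ K)
    (h : ∀ v : σ → K, (∀ i, v i ∈ S) → MvPolynomial.eval v p = 0) : p = 0 := by
  classical
  obtain ⟨s₀, hs₀⟩ := hS.nonempty
  obtain ⟨n, f, hf, q, rfl⟩ := MvPolynomial.exists_fin_rename p
  suffices q = 0 by rw [this, map_zero]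
  apply subset_funext_fin hS
  intro x hx
  have := h (Function.extend f x (fun _ => s₀)) ?_
  · rw [MvPolynomial.eval, MvPolynomial.eval₂Hom_rename] at this
    rw [Function.extend_comp hf] at this
    exact this
  · intro i
    rcases em (∃ j, f j = i) with ⟨j, rfl⟩ | hnot
    · rw [hf.extend_apply]; exact hx j
    · rw [Function.extend_apply' _ _ _ hnot]; exact hs₀

/-- Let `K` be a field of characteristic `0` with a nontrivial involution `conj`, `B` a
finite set, and `p` a nonzero integer polynomial in the variables `{X_b : b ∈ B} ∪
{X̄_b : b ∈ B}` (encoded as `B ⊕ B`, with `inl b ↦ X_b` and `inr b ↦ X̄_b`).  Then some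
assignment `k : B → K`, evaluating `X_b` at `k b` and `X̄_b` at `conj (k b)`, makes `p`
nonzero. -/
theorem exists_eval_ne_zero_of_involution
    (K : Type) [Field K] [CharZero K] (conj : K →+* K)
    (hinv : ∀ x : K, conj (conj x) = x) (hnontriv : ∃ x : K, conj x ≠ x)
    (B : Type) [Fintype B]
    (p : MvPolynomial (B ⊕ B) ℤ) (hp : p ≠ 0) :
    ∃ k : B → K,
      MvPolynomial.aeval (Sum.elim k (fun b => conj (k b))) p ≠ 0 := by
  classical
  obtain ⟨α, hα⟩ := hnontriv
  set δ : K := α - conj α with hδdef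
  have hδ : δ ≠ 0 := sub_ne_zero.mpr (fun h => hα h.symm)
  have hconjδ : conj δ = -δ := by
    rw [hδdef, map_sub, hinv]; ring
  -- the fixed set of conj is infinite (contains ℕ)
  have hS : {x : K | conj x = x}.Infinite := by
    apply Set.infinite_of_injective_forall_mem (f := fun n : ℕ => (n : K))
    · exact Nat.cast_injective
    · intro n; exact map_natCast conj n
  -- image of p in K
  set P : MvPolynomial (B ⊕ B) K := MvPolynomial.map (Int.castRingHom K) p with hPdef
  have hP : P ≠ 0 := fun h => hp <|
    MvPolynomial.map_injective (Int.castRingHom K) Int.cast_injective (by simpa using h)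
  -- change of variables
  set u : B ⊕ B → MvPolynomial (B ⊕ B) K :=
    Sum.elim (fun b => X (Sum.inl b) + C δ * X (Sum.inr b))
             (fun b => X (Sum.inl b) - C δ * X (Sum.inr b)) with hu
  set Φ : MvPolynomial (B ⊕ B) K →ₐ[K] MvPolynomial (B ⊕ B) K := MvPolynomial.aeval u with hΦ
  set w : B ⊕ B → MvPolynomial (B ⊕ B) K :=
    Sum.elim (fun b => C (2⁻¹ : K) * (X (Sum.inl b) + X (Sum.inr b)))
             (fun b => C ((2 * δ)⁻¹) * (X (Sum.inl b) - X (Sum.inr b))) with hw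
  have hA : (2 : MvPolynomial (B ⊕ B) K) * C (2⁻¹ : K) = 1 := by
    rw [← map_ofNat (C : K →+* MvPolynomial (B ⊕ B) K) 2, ← C_mul,
      mul_inv_cancel₀ (two_ne_zero (α := K)), C_1]
  have hB : (C δ : MvPolynomial (B ⊕ B) K) * C ((2 * δ)⁻¹) = C (2⁻¹ : K) := by
    rw [← C_mul]
    congr 1
    rw [mul_inv, mul_comm (2⁻¹ : K), ← mul_assoc, mul_inv_cancel₀ hδ, one_mul]
  have hcomp : (MvPolynomial.aeval w : MvPolynomial (B ⊕ B) K →ₐ[K] _).comp Φ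
      = AlgHom.id K _ := by
    apply MvPolynomial.algHom_ext
    intro i
    rcases i with b | b <;>
      · simp only [AlgHom.comp_apply, AlgHom.id_apply, hΦ, aeval_X, hu, hw,
          Sum.elim_inl, Sum.elim_inr, map_add, map_sub, map_mul, aeval_C,
          MvPolynomial.algebraMap_eq]
        first
        | linear_combination (X (Sum.inl b) : MvPolynomial (B ⊕ B) K) * hA
            + (X (Sum.inl b) - X (Sum.inr b) : MvPolynomial (B ⊕ B) K) * hB
        | linear_combination (X (Sum.inr b) : MvPolynomial (B ⊕ B) K) * hA
            + (X (Sum.inr b) - X (Sum.inl b) : MvPolynomial (B ⊕ B) K) * hB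
  have hΦinj : Function.Injective Φ := by
    intro x y hxy
    have h' := congrArg (MvPolynomial.aeval w) hxy
    have hx := congrArg (fun f => f x) hcomp
    have hy := congrArg (fun f => f y) hcomp
    simp only [AlgHom.comp_apply, AlgHom.id_apply] at hx hy
    rw [← hx, ← hy, h']
  have hQ : Φ P ≠ 0 := fun h => hP (hΦinj (by simpa using h))
  -- find a point with coordinates fixed by conj where Φ P does not vanish
  have hex : ¬ ∀ v : (B ⊕ B) → K, (∀ i, v i ∈ {x : K | conj x = x}) →
      MvPolynomial.eval v (Φ P) = 0 := fun h => hQ (subset_funext hS _ h)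
  push_neg at hex
  obtain ⟨v, hv, hne⟩ := hex
  refine ⟨fun b => v (Sum.inl b) + δ * v (Sum.inr b), ?_⟩
  have hconjk : ∀ b, conj (v (Sum.inl b) + δ * v (Sum.inr b))
      = v (Sum.inl b) - δ * v (Sum.inr b) := by
    intro b
    have h1 : conj (v (Sum.inl b)) = v (Sum.inl b) := hv (Sum.inl b)
    have h2 : conj (v (Sum.inr b)) = v (Sum.inr b) := hv (Sum.inr b)
    rw [map_add, map_mul, hconjδ, h1, h2]
    ring
  intro hzero
  apply hne
  have step1 : MvPolynomial.eval v (Φ P)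
      = MvPolynomial.aeval (fun i => MvPolynomial.eval v (u i)) P := by
    have h' := congrArg (fun f => f P)
      (MvPolynomial.comp_aeval (R := K) u (MvPolynomial.aeval v : MvPolynomial (B ⊕ B) K →ₐ[K] K))
    simp only [AlgHom.comp_apply] at h'
    have hev : ∀ q : MvPolynomial (B ⊕ B) K,
        MvPolynomial.aeval (R := K) v q = MvPolynomial.eval v q := fun q => rfl
    rw [hΦ]
    simp only [hev] at h'
    exact h'
  have step2 : (fun i => MvPolynomial.eval v (u i))
      = Sum.elim (fun b => v (Sum.inl b) + δ * v (Sum.inr b))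
          (fun b => conj (v (Sum.inl b) + δ * v (Sum.inr b))) := by
    funext i
    rcases i with b | b
    · simp only [hu, Sum.elim_inl, map_add, map_mul, eval_X, eval_C]
    · simp only [hu, Sum.elim_inr, map_sub, map_mul, eval_X, eval_C]
      exact (hconjk b).symm
  rw [step1, step2]
  set k : B → K := fun b => v (Sum.inl b) + δ * v (Sum.inr b) with hk
  have hfinal : MvPolynomial.aeval (Sum.elim k fun b => conj (k b)) P
      = MvPolynomial.aeval (Sum.elim k fun b => conj (k b)) p := by
    have hhom : (algebraMap K K).comp (Int.castRingHom K) = algebraMap ℤ K :=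
      Subsingleton.elim _ _
    rw [hPdef, MvPolynomial.aeval_def, MvPolynomial.aeval_def, MvPolynomial.eval₂_map, hhom]
  rw [hfinal]
  exact hzero
end

section
/- Let C and D be monoidal categories with D braided, and let (M, p_M, u_M) and (N, p_N, u_N) be strong monoidal functors from C to D, where p_M : M(A ⊗ B) ≅ M(A) ⊗ M(B) and u_M : M(𝟙) ≅ 𝟙 are the coherence isomorphisms. Define P on objects by P(A) := M(A) ⊗ N(A) and on morphisms by P(f) := M(f) ⊗ N(f), with coherence isomorphisms p_P : P(A ⊗ B) → P(A) ⊗ P(B) given by (p_M ⊗ p_N) followed by the middle-four interchange (id_{M(A)} ⊗ β_{M(B),N(A)} ⊗ id_{N(B)}, inserting the evident associators, where β is the braiding), and u_P : P(𝟙) → 𝟙 given by (u_M ⊗ u_N) followed by the unitor. Then (P, p_P, u_P) is a strong monoidal functor from C to D. Moreover, if D is symmetric, A carries an SCFA (A, μ, η, δ, ε) in C, and M(A) and N(A) carry SCFAs such that M and N each carry the SCFA of A to the SCFAs of M(A) and N(A) respectively (via their coherence isomorphisms), then P carries the SCFA of A to the product SCFA on M(A) ⊗ N(A). -/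
open CategoryTheory MonoidalCategory

universe v₁ v₂ u₁ u₂

variable {C : Type u₁} [Category.{v₁} C] [MonoidalCategory C]
variable {D : Type u₂} [Category.{v₂} D] [MonoidalCategory D]

/-- The data of a Frobenius structure (μ, η, δ, ε) on an object of a monoidal category. -/
structure FrobData {E : Type*} [Category E] [MonoidalCategory E] (X : E) where
  mul : X ⊗ X ⟶ X
  unit : 𝟙_ E ⟶ X
  comul : X ⟶ X ⊗ X
  counit : X ⟶ 𝟙_ E

/-- The axioms of a special commutative Frobenius algebra (SCFA). -/
def FrobData.IsSCFA {E : Type*} [Category E] [MonoidalCategory E] [BraidedCategory E]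
    {X : E} (S : FrobData X) : Prop :=
  ((X ◁ S.unit) ≫ S.mul = (ρ_ X).hom) ∧
  ((α_ X X X).hom ≫ (X ◁ S.mul) ≫ S.mul = (S.mul ▷ X) ≫ S.mul) ∧
  ((β_ X X).hom ≫ S.mul = S.mul) ∧
  (S.comul ≫ (X ◁ S.counit) = (ρ_ X).inv) ∧
  (S.comul ≫ (S.comul ▷ X) ≫ (α_ X X X).hom = S.comul ≫ (X ◁ S.comul)) ∧
  (S.comul ≫ (β_ X X).hom = S.comul) ∧
  ((S.comul ▷ X) ≫ (α_ X X X).hom ≫ (X ◁ S.mul) = S.mul ≫ S.comul) ∧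
  (S.comul ≫ S.mul = 𝟙 X)

/-- The product Frobenius structure on `X ⊗ Y`, using the braiding for the
middle-four interchange. -/
def FrobData.prod {E : Type*} [Category E] [MonoidalCategory E] [BraidedCategory E]
    {X Y : E} (S : FrobData X) (T : FrobData Y) : FrobData (X ⊗ Y) where
  mul := tensorμ X Y X Y ≫ (S.mul ⊗ₘ T.mul)
  unit := (λ_ (𝟙_ E)).inv ≫ (S.unit ⊗ₘ T.unit)
  comul := (S.comul ⊗ₘ T.comul) ≫ tensorμ X X Y Y
  counit := (S.counit ⊗ₘ T.counit) ≫ (λ_ (𝟙_ E)).hom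

/-- The coherence data and axioms of a strong monoidal functor `(F, p_F, u_F)`, with
`p_F : F(A ⊗ B) ≅ F A ⊗ F B` and `u_F : F 𝟙 ≅ 𝟙`. -/
structure SMData (F : C ⥤ D) where
  p : ∀ A B : C, F.obj (A ⊗ B) ≅ F.obj A ⊗ F.obj B
  u : F.obj (𝟙_ C) ≅ 𝟙_ D
  p_natural : ∀ {A B A' B' : C} (f : A ⟶ A') (g : B ⟶ B'),
    F.map (f ⊗ₘ g) ≫ (p A' B').hom = (p A B).hom ≫ (F.map f ⊗ₘ F.map g)
  assoc : ∀ A B E : C,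
    F.map (α_ A B E).hom ≫ (p A (B ⊗ E)).hom ≫ (F.obj A ◁ (p B E).hom)
      = (p (A ⊗ B) E).hom ≫ ((p A B).hom ▷ F.obj E) ≫
          (α_ (F.obj A) (F.obj B) (F.obj E)).hom
  left_unit : ∀ A : C,
    F.map (λ_ A).hom = (p (𝟙_ C) A).hom ≫ (u.hom ▷ F.obj A) ≫ (λ_ (F.obj A)).hom
  right_unit : ∀ A : C,
    F.map (ρ_ A).hom = (p A (𝟙_ C)).hom ≫ (F.obj A ◁ u.hom) ≫ (ρ_ (F.obj A)).hom

/-- A (strong) monoidal functor `F` with coherence morphisms `pHom`, `uHom` carries a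
Frobenius structure `S` on `X` to the Frobenius structure `T` on `F X`. -/
def Carries (F : C ⥤ D) (pHom : ∀ A B : C, F.obj (A ⊗ B) ⟶ F.obj A ⊗ F.obj B)
    (uHom : F.obj (𝟙_ C) ⟶ 𝟙_ D) (X : C) (S : FrobData X)
    (T : FrobData (F.obj X)) : Prop :=
  (F.map S.mul = pHom X X ≫ T.mul) ∧
  (F.map S.unit = uHom ≫ T.unit) ∧
  (T.comul = F.map S.comul ≫ pHom X X) ∧
  (T.counit = F.map S.counit ≫ uHom)

variable [BraidedCategory D]

/-- The pointwise tensor product of two functors: `P(A) := M(A) ⊗ N(A)` and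
`P(f) := M(f) ⊗ N(f)`. -/
def Pfun (M N : C ⥤ D) : C ⥤ D where
  obj A := M.obj A ⊗ N.obj A
  map f := M.map f ⊗ₘ N.map f

/-- The coherence morphism `p_P := (p_M ⊗ p_N)` followed by the middle-four interchange
(built from the braiding and the evident associators). -/
def pPhom (M N : C ⥤ D) (SM : SMData M) (SN : SMData N) (A B : C) :
    (Pfun M N).obj (A ⊗ B) ⟶ (Pfun M N).obj A ⊗ (Pfun M N).obj B :=
  ((SM.p A B).hom ⊗ₘ (SN.p A B).hom) ≫ tensorμ (M.obj A) (M.obj B) (N.obj A) (N.obj B)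

/-- The coherence morphism `u_P := (u_M ⊗ u_N)` followed by the unitor. -/
def uPhom (M N : C ⥤ D) (SM : SMData M) (SN : SMData N) :
    (Pfun M N).obj (𝟙_ C) ⟶ 𝟙_ D :=
  (SM.u.hom ⊗ₘ SN.u.hom) ≫ (λ_ (𝟙_ D)).hom


/-! ### Auxiliary lemmas -/

section Aux

variable {E : Type*} [Category E] [MonoidalCategory E] [BraidedCategory E]

private lemma binv_aux (hsym : ∀ X Y : E, (β_ X Y).hom ≫ (β_ Y X).hom = 𝟙 _) (X Y : E) :
    (β_ X Y).inv = (β_ Y X).hom := (Iso.inv_ext' (hsym X Y)).symm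

private lemma tensorδ_eq_aux (hsym : ∀ X Y : E, (β_ X Y).hom ≫ (β_ Y X).hom = 𝟙 _)
    (X₁ X₂ Y₁ Y₂ : E) :
    tensorδ X₁ X₂ Y₁ Y₂ = tensorμ X₁ Y₁ X₂ Y₂ := by
  rw [tensorδ, tensorμ, binv_aux hsym]

private lemma tμ_cancel (hsym : ∀ X Y : E, (β_ X Y).hom ≫ (β_ Y X).hom = 𝟙 _)
    (X₁ X₂ Y₁ Y₂ : E) :
    tensorμ X₁ X₂ Y₁ Y₂ ≫ tensorμ X₁ Y₁ X₂ Y₂ = 𝟙 _ := by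
  rw [← tensorδ_eq_aux hsym X₁ X₂ Y₁ Y₂, tensorμ_tensorδ]

private lemma braiding_tμ (hsym : ∀ X Y : E, (β_ X Y).hom ≫ (β_ Y X).hom = 𝟙 _)
    (W X Y Z : E) :
    (β_ (W ⊗ X) (Y ⊗ Z)).hom ≫ tensorμ Y Z W X
      = tensorμ W X Y Z ≫ ((β_ W Y).hom ⊗ₘ (β_ X Z).hom) := by
  simp only [tensorμ, Category.assoc, BraidedCategory.braiding_naturality,
    BraidedCategory.braiding_tensor_right_hom, BraidedCategory.braiding_tensor_left_hom,
    comp_whiskerRight, whisker_assoc, MonoidalCategory.whiskerLeft_comp, pentagon_assoc,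
    pentagon_inv_hom_hom_hom_inv_assoc, Iso.inv_hom_id_assoc, whiskerLeft_hom_inv_assoc]
  slice_lhs 11 12 =>
    rw [← MonoidalCategory.whiskerLeft_comp, ← comp_whiskerRight, hsym]
  simp only [id_whiskerRight, MonoidalCategory.whiskerLeft_id, Category.id_comp, Category.assoc]
  slice_lhs 10 11 =>
    rw [← MonoidalCategory.whiskerLeft_comp, Iso.inv_hom_id, MonoidalCategory.whiskerLeft_id]
  simp only [Category.id_comp, Category.assoc]
  slice_lhs 9 10 => rw [associator_inv_naturality_right]
  slice_lhs 8 9 => rw [Iso.hom_inv_id]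
  simp only [Category.id_comp, Category.assoc]
  slice_lhs 6 7 => rw [associator_naturality_left]
  rw [MonoidalCategory.tensorHom_def]
  have coh : (α_ W (Y ⊗ X) Z).inv ≫ ((α_ W Y X).inv ▷ Z) ≫ (α_ (W ⊗ Y) X Z).hom
      = W ◁ (α_ Y X Z).hom ≫ (α_ W Y (X ⊗ Z)).inv := by monoidal
  slice_lhs 4 6 => rw [coh]
  simp only [Category.assoc]

private lemma tμ_braiding_right (hsym : ∀ X Y : E, (β_ X Y).hom ≫ (β_ Y X).hom = 𝟙 _)
    (X Y : E) :
    tensorμ X X Y Y ≫ (β_ (X ⊗ Y) (X ⊗ Y)).hom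
      = ((β_ X X).hom ⊗ₘ (β_ Y Y).hom) ≫ tensorμ X X Y Y := by
  have h := braiding_tμ hsym X Y X Y
  calc tensorμ X X Y Y ≫ (β_ (X ⊗ Y) (X ⊗ Y)).hom
      = tensorμ X X Y Y ≫ ((β_ (X ⊗ Y) (X ⊗ Y)).hom ≫ tensorμ X Y X Y) ≫ tensorμ X X Y Y := by
        rw [Category.assoc, tμ_cancel hsym X Y X Y, Category.comp_id]
    _ = (tensorμ X X Y Y ≫ tensorμ X Y X Y) ≫ ((β_ X X).hom ⊗ₘ (β_ Y Y).hom) ≫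
          tensorμ X X Y Y := by
        rw [h]; simp only [Category.assoc]
    _ = ((β_ X X).hom ⊗ₘ (β_ Y Y).hom) ≫ tensorμ X X Y Y := by
        rw [tμ_cancel hsym X X Y Y, Category.id_comp]

/-- An SCFA gives a monoid object. -/
private def FrobData.toMon_ {X : E} (S : FrobData X) (h : S.IsSCFA) : MonObj X where
  one := S.unit
  mul := S.mul
  one_mul := by
    obtain ⟨h1, -, h3, -⟩ := h
    calc S.unit ▷ X ≫ S.mul = S.unit ▷ X ≫ (β_ X X).hom ≫ S.mul := by rw [h3]
    _ = (β_ (𝟙_ E) X).hom ≫ (X ◁ S.unit) ≫ S.mul := by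
        rw [← BraidedCategory.braiding_naturality_left_assoc]
    _ = (β_ (𝟙_ E) X).hom ≫ (ρ_ X).hom := by rw [h1]
    _ = (λ_ X).hom := braiding_rightUnitor X
  mul_one := h.1
  mul_assoc := h.2.1.symm

/-- An SCFA gives a comonoid object. -/
private def FrobData.toComon_ {X : E} (S : FrobData X) (h : S.IsSCFA) : ComonObj X where
  counit := S.counit
  comul := S.comul
  counit_comul := by
    obtain ⟨-, -, -, h4, -, h6, -⟩ := h
    calc S.comul ≫ S.counit ▷ X = S.comul ≫ (β_ X X).hom ≫ S.counit ▷ X := by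
          rw [reassoc_of% h6]
    _ = S.comul ≫ (X ◁ S.counit) ≫ (β_ X (𝟙_ E)).hom := by
          rw [BraidedCategory.braiding_naturality_right]
    _ = (ρ_ X).inv ≫ (β_ X (𝟙_ E)).hom := by rw [reassoc_of% h4]
    _ = (λ_ X).inv := rightUnitor_inv_braiding X
  comul_counit := h.2.2.2.1
  comul_assoc := h.2.2.2.2.1.symm

/-- The product of two SCFAs is an SCFA (in a symmetric monoidal category). -/
private theorem FrobData.prod_isSCFA (hsym : ∀ X Y : E, (β_ X Y).hom ≫ (β_ Y X).hom = 𝟙 _)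
    {X Y : E} (S : FrobData X) (T : FrobData Y)
    (hS : S.IsSCFA) (hT : T.IsSCFA) : (S.prod T).IsSCFA := by
  obtain ⟨hS1, hS2, hS3, hS4, hS5, hS6, hS7, hS8⟩ := hS
  obtain ⟨hT1, hT2, hT3, hT4, hT5, hT6, hT7, hT8⟩ := hT
  have hS' : S.IsSCFA := ⟨hS1, hS2, hS3, hS4, hS5, hS6, hS7, hS8⟩
  have hT' : T.IsSCFA := ⟨hT1, hT2, hT3, hT4, hT5, hT6, hT7, hT8⟩
  refine ⟨?_, ?_, ?_, ?_, ?_, ?_, ?_, ?_⟩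
  · letI := S.toMon_ hS'; letI := T.toMon_ hT'; exact MonObj.Mon_tensor_mul_one X Y
  · letI := S.toMon_ hS'; letI := T.toMon_ hT'; exact (MonObj.Mon_tensor_mul_assoc X Y).symm
  · show (β_ (X ⊗ Y) (X ⊗ Y)).hom ≫ tensorμ X Y X Y ≫ (S.mul ⊗ₘ T.mul)
        = tensorμ X Y X Y ≫ (S.mul ⊗ₘ T.mul)
    rw [← Category.assoc, braiding_tμ hsym, Category.assoc, tensorHom_comp_tensorHom, hS3, hT3]
  · letI := S.toComon_ hS'; letI := T.toComon_ hT'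
    have h := ComonObj.comul_counit (X ⊗ Y)
    rw [Comon.tensorObj_comul] at h
    exact h
  · letI := S.toComon_ hS'; letI := T.toComon_ hT'
    have h := ComonObj.comul_assoc (X ⊗ Y)
    rw [Comon.tensorObj_comul] at h
    exact h.symm
  · show ((S.comul ⊗ₘ T.comul) ≫ tensorμ X X Y Y) ≫ (β_ (X ⊗ Y) (X ⊗ Y)).hom
        = (S.comul ⊗ₘ T.comul) ≫ tensorμ X X Y Y
    rw [Category.assoc, tμ_braiding_right hsym, tensorHom_comp_tensorHom_assoc, hS6, hT6]
  · show (((S.comul ⊗ₘ T.comul) ≫ tensorμ X X Y Y) ▷ (X ⊗ Y)) ≫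
        (α_ (X ⊗ Y) (X ⊗ Y) (X ⊗ Y)).hom ≫
        ((X ⊗ Y) ◁ (tensorμ X Y X Y ≫ (S.mul ⊗ₘ T.mul)))
      = (tensorμ X Y X Y ≫ (S.mul ⊗ₘ T.mul)) ≫ ((S.comul ⊗ₘ T.comul) ≫ tensorμ X X Y Y)
    have key : (tensorμ X X Y Y ▷ (X ⊗ Y)) ≫ (α_ (X ⊗ Y) (X ⊗ Y) (X ⊗ Y)).hom ≫
          ((X ⊗ Y) ◁ tensorμ X Y X Y)
        = tensorμ (X ⊗ X) (Y ⊗ Y) X Y ≫ ((α_ X X X).hom ⊗ₘ (α_ Y Y Y).hom) ≫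
            tensorμ X (X ⊗ X) Y (Y ⊗ Y) := by
      have ta := tensor_associativity X Y X Y X Y
      calc (tensorμ X X Y Y ▷ (X ⊗ Y)) ≫ (α_ (X ⊗ Y) (X ⊗ Y) (X ⊗ Y)).hom ≫
            ((X ⊗ Y) ◁ tensorμ X Y X Y)
          = (tensorμ X X Y Y ▷ (X ⊗ Y)) ≫ ((α_ (X ⊗ Y) (X ⊗ Y) (X ⊗ Y)).hom ≫
              ((X ⊗ Y) ◁ tensorμ X Y X Y) ≫ tensorμ X Y (X ⊗ X) (Y ⊗ Y)) ≫
              tensorμ X (X ⊗ X) Y (Y ⊗ Y) := by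
            rw [Category.assoc, Category.assoc, tμ_cancel hsym X Y (X ⊗ X) (Y ⊗ Y),
              Category.comp_id]
        _ = (tensorμ X X Y Y ▷ (X ⊗ Y)) ≫ ((tensorμ X Y X Y ▷ (X ⊗ Y)) ≫
              tensorμ (X ⊗ X) (Y ⊗ Y) X Y ≫ ((α_ X X X).hom ⊗ₘ (α_ Y Y Y).hom)) ≫
              tensorμ X (X ⊗ X) Y (Y ⊗ Y) := by rw [← ta]
        _ = tensorμ (X ⊗ X) (Y ⊗ Y) X Y ≫ ((α_ X X X).hom ⊗ₘ (α_ Y Y Y).hom) ≫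
              tensorμ X (X ⊗ X) Y (Y ⊗ Y) := by
            slice_lhs 1 2 => rw [← comp_whiskerRight, tμ_cancel hsym X X Y Y]
            simp only [id_whiskerRight, Category.id_comp, Category.assoc]
    have front : ((S.comul ⊗ₘ T.comul) ▷ (X ⊗ Y)) ≫ tensorμ (X ⊗ X) (Y ⊗ Y) X Y
        = tensorμ X Y X Y ≫ ((S.comul ▷ X) ⊗ₘ (T.comul ▷ Y)) :=
      tensorμ_natural_left S.comul T.comul X Y
    have back : tensorμ X (X ⊗ X) Y (Y ⊗ Y) ≫ ((X ⊗ Y) ◁ (S.mul ⊗ₘ T.mul))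
        = ((X ◁ S.mul) ⊗ₘ (Y ◁ T.mul)) ≫ tensorμ X X Y Y := by
      have nr := tensorμ_natural_right X Y S.mul T.mul
      calc tensorμ X (X ⊗ X) Y (Y ⊗ Y) ≫ ((X ⊗ Y) ◁ (S.mul ⊗ₘ T.mul))
          = tensorμ X (X ⊗ X) Y (Y ⊗ Y) ≫ (((X ⊗ Y) ◁ (S.mul ⊗ₘ T.mul)) ≫
              tensorμ X Y X Y) ≫ tensorμ X X Y Y := by
            rw [Category.assoc, tμ_cancel hsym X Y X Y, Category.comp_id]
        _ = (tensorμ X (X ⊗ X) Y (Y ⊗ Y) ≫ tensorμ X Y (X ⊗ X) (Y ⊗ Y)) ≫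
              ((X ◁ S.mul) ⊗ₘ (Y ◁ T.mul)) ≫ tensorμ X X Y Y := by
            rw [nr]; simp only [Category.assoc]
        _ = ((X ◁ S.mul) ⊗ₘ (Y ◁ T.mul)) ≫ tensorμ X X Y Y := by
            rw [tμ_cancel hsym X (X ⊗ X) Y (Y ⊗ Y), Category.id_comp]
    calc (((S.comul ⊗ₘ T.comul) ≫ tensorμ X X Y Y) ▷ (X ⊗ Y)) ≫
          (α_ (X ⊗ Y) (X ⊗ Y) (X ⊗ Y)).hom ≫
          ((X ⊗ Y) ◁ (tensorμ X Y X Y ≫ (S.mul ⊗ₘ T.mul)))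
        = ((S.comul ⊗ₘ T.comul) ▷ (X ⊗ Y)) ≫ ((tensorμ X X Y Y ▷ (X ⊗ Y)) ≫
            (α_ (X ⊗ Y) (X ⊗ Y) (X ⊗ Y)).hom ≫ ((X ⊗ Y) ◁ tensorμ X Y X Y)) ≫
            ((X ⊗ Y) ◁ (S.mul ⊗ₘ T.mul)) := by
          simp only [comp_whiskerRight, MonoidalCategory.whiskerLeft_comp, Category.assoc]
      _ = ((S.comul ⊗ₘ T.comul) ▷ (X ⊗ Y)) ≫ (tensorμ (X ⊗ X) (Y ⊗ Y) X Y ≫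
            ((α_ X X X).hom ⊗ₘ (α_ Y Y Y).hom) ≫ tensorμ X (X ⊗ X) Y (Y ⊗ Y)) ≫
            ((X ⊗ Y) ◁ (S.mul ⊗ₘ T.mul)) := by rw [key]
      _ = tensorμ X Y X Y ≫ ((S.comul ▷ X) ⊗ₘ (T.comul ▷ Y)) ≫
            ((α_ X X X).hom ⊗ₘ (α_ Y Y Y).hom) ≫ (((X ◁ S.mul) ⊗ₘ (Y ◁ T.mul)) ≫
            tensorμ X X Y Y) := by
          rw [← reassoc_of% front, ← back]; simp only [Category.assoc]
      _ = tensorμ X Y X Y ≫ (((S.comul ▷ X) ≫ (α_ X X X).hom ≫ (X ◁ S.mul)) ⊗ₘ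
            ((T.comul ▷ Y) ≫ (α_ Y Y Y).hom ≫ (Y ◁ T.mul))) ≫ tensorμ X X Y Y := by
          simp only [← tensorHom_comp_tensorHom, Category.assoc]
      _ = tensorμ X Y X Y ≫ ((S.mul ≫ S.comul) ⊗ₘ (T.mul ≫ T.comul)) ≫ tensorμ X X Y Y := by
          rw [hS7, hT7]
      _ = (tensorμ X Y X Y ≫ (S.mul ⊗ₘ T.mul)) ≫ ((S.comul ⊗ₘ T.comul) ≫ tensorμ X X Y Y) := by
          simp only [← tensorHom_comp_tensorHom, Category.assoc]
  · show ((S.comul ⊗ₘ T.comul) ≫ tensorμ X X Y Y) ≫ tensorμ X Y X Y ≫ (S.mul ⊗ₘ T.mul) = 𝟙 _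
    rw [Category.assoc, ← Category.assoc (tensorμ X X Y Y), tμ_cancel hsym X X Y Y,
      Category.id_comp, tensorHom_comp_tensorHom, hS8, hT8, id_tensorHom_id]

end Aux

/-- The pointwise tensor product of two strong monoidal functors is a strong monoidal
functor: `p_P` and `u_P` are isomorphisms satisfying naturality and the associativity
and unit coherence axioms.  Moreover, if `D` is symmetric, `A` carries an SCFA in `C`,
and `M` and `N` carry it to SCFAs on `M(A)` and `N(A)`, then `P` carries the SCFA of `A`
to the product SCFA on `M(A) ⊗ N(A)`. -/
theorem Pfun_strong_monoidal (M N : C ⥤ D) (SM : SMData M) (SN : SMData N) :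
    (∀ A B : C, IsIso (pPhom M N SM SN A B)) ∧
    IsIso (uPhom M N SM SN) ∧
    (∀ {A B A' B' : C} (f : A ⟶ A') (g : B ⟶ B'),
      (Pfun M N).map (f ⊗ₘ g) ≫ pPhom M N SM SN A' B'
        = pPhom M N SM SN A B ≫ ((Pfun M N).map f ⊗ₘ (Pfun M N).map g)) ∧
    (∀ A B E : C,
      (Pfun M N).map (α_ A B E).hom ≫ pPhom M N SM SN A (B ⊗ E) ≫
          ((Pfun M N).obj A ◁ pPhom M N SM SN B E)
        = pPhom M N SM SN (A ⊗ B) E ≫ (pPhom M N SM SN A B ▷ (Pfun M N).obj E) ≫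
            (α_ ((Pfun M N).obj A) ((Pfun M N).obj B) ((Pfun M N).obj E)).hom) ∧
    (∀ A : C, (Pfun M N).map (λ_ A).hom
        = pPhom M N SM SN (𝟙_ C) A ≫ (uPhom M N SM SN ▷ (Pfun M N).obj A) ≫
            (λ_ ((Pfun M N).obj A)).hom) ∧
    (∀ A : C, (Pfun M N).map (ρ_ A).hom
        = pPhom M N SM SN A (𝟙_ C) ≫ ((Pfun M N).obj A ◁ uPhom M N SM SN) ≫
            (ρ_ ((Pfun M N).obj A)).hom) ∧
    ((∀ X Y : D, (β_ X Y).hom ≫ (β_ Y X).hom = 𝟙 (X ⊗ Y)) →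
      ∀ [BraidedCategory C] (A : C) (SA : FrobData A), SA.IsSCFA →
        ∀ (TM : FrobData (M.obj A)) (TN : FrobData (N.obj A)),
          TM.IsSCFA → TN.IsSCFA →
          Carries M (fun X Y => (SM.p X Y).hom) SM.u.hom A SA TM →
          Carries N (fun X Y => (SN.p X Y).hom) SN.u.hom A SA TN →
          ((TM.prod TN).IsSCFA ∧
            Carries (Pfun M N) (pPhom M N SM SN) (uPhom M N SM SN) A SA
              (TM.prod TN))) := by
  refine ⟨?_, ?_, ?_, ?_, ?_, ?_, ?_⟩
  · intro A B
    dsimp only [pPhom, Pfun]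
    haveI : IsIso (tensorμ (M.obj A) (M.obj B) (N.obj A) (N.obj B)) :=
      ⟨tensorδ _ _ _ _, tensorμ_tensorδ _ _ _ _, tensorδ_tensorμ _ _ _ _⟩
    haveI : IsIso ((SM.p A B).hom ⊗ₘ (SN.p A B).hom) := by
      rw [MonoidalCategory.tensorHom_def]; infer_instance
    infer_instance
  · dsimp only [uPhom, Pfun]
    haveI : IsIso (SM.u.hom ⊗ₘ SN.u.hom) := by
      rw [MonoidalCategory.tensorHom_def]; infer_instance
    infer_instance
  · intro A B A' B' f g
    dsimp only [Pfun, pPhom]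
    rw [tensorHom_comp_tensorHom_assoc, SM.p_natural, SN.p_natural, ← tensorHom_comp_tensorHom_assoc, tensorμ_natural]
    simp only [Category.assoc]
  · intro A B E
    dsimp only [Pfun, pPhom]
    simp only [MonoidalCategory.whiskerLeft_comp, comp_whiskerRight, Category.assoc]
    have h1 : ((M.obj A ◁ (SM.p B E).hom) ⊗ₘ (N.obj A ◁ (SN.p B E).hom)) ≫
          tensorμ (M.obj A) (M.obj B ⊗ M.obj E) (N.obj A) (N.obj B ⊗ N.obj E)
        = tensorμ (M.obj A) (M.obj (B ⊗ E)) (N.obj A) (N.obj (B ⊗ E)) ≫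
          ((M.obj A ⊗ N.obj A) ◁ ((SM.p B E).hom ⊗ₘ (SN.p B E).hom)) := by
      simpa using tensorμ_natural (𝟙 (M.obj A)) (SM.p B E).hom (𝟙 (N.obj A)) (SN.p B E).hom
    have h2 : (((SM.p A B).hom ▷ M.obj E) ⊗ₘ ((SN.p A B).hom ▷ N.obj E)) ≫
          tensorμ (M.obj A ⊗ M.obj B) (M.obj E) (N.obj A ⊗ N.obj B) (N.obj E)
        = tensorμ (M.obj (A ⊗ B)) (M.obj E) (N.obj (A ⊗ B)) (N.obj E) ≫
          (((SM.p A B).hom ⊗ₘ (SN.p A B).hom) ▷ (M.obj E ⊗ N.obj E)) := by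
      simpa using tensorμ_natural (SM.p A B).hom (𝟙 (M.obj E)) (SN.p A B).hom (𝟙 (N.obj E))
    rw [← reassoc_of% h1, ← reassoc_of% h2]
    rw [tensorHom_comp_tensorHom_assoc, tensorHom_comp_tensorHom_assoc]
    simp only [Category.assoc]
    rw [SM.assoc, SN.assoc, associator_monoidal]
    simp only [← tensorHom_comp_tensorHom, Category.assoc]
  · intro A
    dsimp only [Pfun, pPhom, uPhom]
    have h : ((SM.u.hom ▷ M.obj A) ⊗ₘ (SN.u.hom ▷ N.obj A)) ≫
          tensorμ (𝟙_ D) (M.obj A) (𝟙_ D) (N.obj A)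
        = tensorμ (M.obj (𝟙_ C)) (M.obj A) (N.obj (𝟙_ C)) (N.obj A) ≫
          ((SM.u.hom ⊗ₘ SN.u.hom) ▷ (M.obj A ⊗ N.obj A)) := by
      simpa using tensorμ_natural SM.u.hom (𝟙 (M.obj A)) SN.u.hom (𝟙 (N.obj A))
    rw [SM.left_unit, SN.left_unit, ← tensorHom_comp_tensorHom, ← tensorHom_comp_tensorHom, leftUnitor_monoidal,
      reassoc_of% h]
    simp only [comp_whiskerRight, Category.assoc]
  · intro A
    dsimp only [Pfun, pPhom, uPhom]
    have h : ((M.obj A ◁ SM.u.hom) ⊗ₘ (N.obj A ◁ SN.u.hom)) ≫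
          tensorμ (M.obj A) (𝟙_ D) (N.obj A) (𝟙_ D)
        = tensorμ (M.obj A) (M.obj (𝟙_ C)) (N.obj A) (N.obj (𝟙_ C)) ≫
          ((M.obj A ⊗ N.obj A) ◁ (SM.u.hom ⊗ₘ SN.u.hom)) := by
      simpa using tensorμ_natural (𝟙 (M.obj A)) SM.u.hom (𝟙 (N.obj A)) SN.u.hom
    rw [SM.right_unit, SN.right_unit, ← tensorHom_comp_tensorHom, ← tensorHom_comp_tensorHom, rightUnitor_monoidal,
      reassoc_of% h]
    simp only [MonoidalCategory.whiskerLeft_comp, Category.assoc]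
  · intro hsym _ A SA hSA TM TN hTM hTN hCM hCN
    refine ⟨FrobData.prod_isSCFA hsym TM TN hTM hTN, ?_, ?_, ?_, ?_⟩
    · -- multiplication
      show (M.map SA.mul ⊗ₘ N.map SA.mul)
          = pPhom M N SM SN A A ≫ tensorμ (M.obj A) (N.obj A) (M.obj A) (N.obj A) ≫
              (TM.mul ⊗ₘ TN.mul)
      dsimp only [pPhom, Pfun]
      rw [hCM.1, hCN.1, ← tensorHom_comp_tensorHom]
      rw [Category.assoc, reassoc_of% (tμ_cancel hsym (M.obj A) (M.obj A) (N.obj A) (N.obj A))]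
    · -- unit
      show (M.map SA.unit ⊗ₘ N.map SA.unit)
          = uPhom M N SM SN ≫ (λ_ (𝟙_ D)).inv ≫ (TM.unit ⊗ₘ TN.unit)
      dsimp only [uPhom, Pfun]
      rw [hCM.2.1, hCN.2.1, ← tensorHom_comp_tensorHom]
      simp only [Category.assoc, Iso.hom_inv_id_assoc]
    · -- comultiplication
      show (TM.comul ⊗ₘ TN.comul) ≫ tensorμ (M.obj A) (M.obj A) (N.obj A) (N.obj A)
          = (M.map SA.comul ⊗ₘ N.map SA.comul) ≫ pPhom M N SM SN A A
      dsimp only [pPhom, Pfun]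
      rw [hCM.2.2.1, hCN.2.2.1, ← tensorHom_comp_tensorHom]
      simp only [Category.assoc]
    · -- counit
      show (TM.counit ⊗ₘ TN.counit) ≫ (λ_ (𝟙_ D)).hom
          = (M.map SA.counit ⊗ₘ N.map SA.counit) ≫ uPhom M N SM SN
      dsimp only [uPhom, Pfun]
      rw [hCM.2.2.2, hCN.2.2.2, ← tensorHom_comp_tensorHom]
      simp only [Category.assoc]
end
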